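/- arXiv:2001.07260 — 2 statements merged into one kernel-verified Lean document; each statement's English description precedes it below -/
import Mathlib

section
/- The rectification operators commute with the raising operators on diagrams: if D is a diagram with 𝚎̄_c(D) ≠ 0 and e_r(D) ≠ 0, then 𝚎̄_c(e_r(D)) = e_r(𝚎̄_c(D)); moreover e_r(D) ≠ 0 if and only if e_r(𝚎̄_c(D)) ≠ 0 whenever 𝚎̄_c(D) ≠ 0, and symmetrically 𝚎̄_c(D) ≠ 0 iff 𝚎̄_c(e_r(D)) ≠ 0 whenever e_r(D) ≠ 0. -/
open scoped Classical

/-- A Kohnert move: take the rightmost cell of row `r` and move it down in its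
column to the highest open row `r'` below (rows indexed from 1). Cells are `(row, column)`. -/
def KohnertMove (D D' : Finset (ℕ × ℕ)) : Prop :=
  ∃ r c r', (r, c) ∈ D ∧ (∀ c', (r, c') ∈ D → c' ≤ c) ∧
    1 ≤ r' ∧ r' < r ∧ (r', c) ∉ D ∧ (∀ r'', r' < r'' → r'' < r → (r'', c) ∈ D) ∧
    D' = insert (r', c) (D.erase (r, c))

/-- The largest part of a weak composition. -/
def maxPart (a : List ℕ) : ℕ := a.foldr max 0

/-- Number of cells of a diagram in row `i`. -/
def rowWeight (D : Finset (ℕ × ℕ)) (i : ℕ) : ℕ :=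
  (D.filter (fun p => p.1 = i)).card

/-- The weight of a diagram, as a finitely supported function recording the
number of cells in each row. -/
noncomputable def wtF (D : Finset (ℕ × ℕ)) : ℕ →₀ ℕ := ∑ p ∈ D, Finsupp.single p.1 1

/-- The exponent vector `x^a` of a weak composition `a` (1-based variables). -/
noncomputable def compFinsupp (a : List ℕ) : ℕ →₀ ℕ :=
  ∑ i ∈ Finset.range a.length, Finsupp.single (i + 1) (a.getD i 0)

/-- The boxes matched by a partial matching. -/
def matchedBoxes (M : Finset ((ℕ × ℕ) × (ℕ × ℕ))) : Finset (ℕ × ℕ) :=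
  M.image Prod.fst ∪ M.image Prod.snd

/-- Initial vertical `i`-pairing: pair any boxes of rows `i` and `i+1` in the
same column. -/
def vInit (i : ℕ) (D : Finset (ℕ × ℕ)) : Finset ((ℕ × ℕ) × (ℕ × ℕ)) :=
  (D.filter (fun p => p.1 = i + 1 ∧ (i, p.2) ∈ D)).image (fun p => (p, (i, p.2)))

/-- One step of the iterative vertical `i`-pairing: pair an unpaired box of row
`i+1` with the rightmost unpaired box of row `i` in a column to its left,
provided all boxes of rows `i`, `i+1` in the columns strictly between them are
already paired. -/
def VStep (i : ℕ) (D : Finset (ℕ × ℕ)) (M M' : Finset ((ℕ × ℕ) × (ℕ × ℕ))) : Prop :=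
  ∃ cx cy, (i + 1, cx) ∈ D ∧ (i, cy) ∈ D ∧ cy < cx ∧
    (i + 1, cx) ∉ matchedBoxes M ∧ (i, cy) ∉ matchedBoxes M ∧
    (∀ p ∈ D, (p.1 = i ∨ p.1 = i + 1) → cy < p.2 → p.2 < cx → p ∈ matchedBoxes M) ∧
    M' = insert ((i + 1, cx), (i, cy)) M

/-- The vertical `i`-pairing of `D`: a matching obtained from the same-column
pairing by iterating `VStep` until no further step applies. -/
def VOutcome (i : ℕ) (D : Finset (ℕ × ℕ)) (M : Finset ((ℕ × ℕ) × (ℕ × ℕ))) : Prop :=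
  Relation.ReflTransGen (VStep i D) (vInit i D) M ∧ ∀ M', ¬ VStep i D M M'

/-- The raising operator `e_i` as a relation: `RaiseRel i D D'` holds when `D'`
is obtained from `D` by pushing the rightmost vertically unpaired box of row
`i+1` down to row `i` (`e_i(D) = 0` corresponds to no `D'` existing). -/
def RaiseRel (i : ℕ) (D D' : Finset (ℕ × ℕ)) : Prop :=
  ∃ M c, VOutcome i D M ∧ (i + 1, c) ∈ D ∧ (i + 1, c) ∉ matchedBoxes M ∧
    (∀ c', (i + 1, c') ∈ D → (i + 1, c') ∉ matchedBoxes M → c' ≤ c) ∧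
    D' = insert (i, c) (D.erase (i + 1, c))

/-- Initial horizontal `c`-pairing: pair any boxes of columns `c` and `c+1` in
the same row. Cells are `(row, column)`. -/
def hInit (c : ℕ) (D : Finset (ℕ × ℕ)) : Finset ((ℕ × ℕ) × (ℕ × ℕ)) :=
  (D.filter (fun p => p.2 = c + 1 ∧ (p.1, c) ∈ D)).image (fun p => (p, (p.1, c)))

/-- One step of the iterative horizontal `c`-pairing: pair an unpaired box of
column `c+1` with the lowest unpaired box of column `c` in a row above it,
provided all boxes of columns `c`, `c+1` in the rows strictly between them are
already paired. -/
def HStep (c : ℕ) (D : Finset (ℕ × ℕ)) (M M' : Finset ((ℕ × ℕ) × (ℕ × ℕ))) : Prop :=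
  ∃ rx ry, (rx, c + 1) ∈ D ∧ (ry, c) ∈ D ∧ rx < ry ∧
    (rx, c + 1) ∉ matchedBoxes M ∧ (ry, c) ∉ matchedBoxes M ∧
    (∀ p ∈ D, (p.2 = c ∨ p.2 = c + 1) → rx < p.1 → p.1 < ry → p ∈ matchedBoxes M) ∧
    M' = insert ((rx, c + 1), (ry, c)) M

/-- The horizontal `c`-pairing of `D`. -/
def HOutcome (c : ℕ) (D : Finset (ℕ × ℕ)) (M : Finset ((ℕ × ℕ) × (ℕ × ℕ))) : Prop :=
  Relation.ReflTransGen (HStep c D) (hInit c D) M ∧ ∀ M', ¬ HStep c D M M'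

/-- The rectification operator `𝚎̄_c` as a relation: `RectRel c D D'` holds when
`D'` is obtained from `D` by pushing the bottom-most horizontally unpaired box
of column `c+1` left to column `c` (`𝚎̄_c(D) = 0` corresponds to no `D'`). -/
def RectRel (c : ℕ) (D D' : Finset (ℕ × ℕ)) : Prop :=
  ∃ M r, HOutcome c D M ∧ (r, c + 1) ∈ D ∧ (r, c + 1) ∉ matchedBoxes M ∧
    (∀ r', (r', c + 1) ∈ D → (r', c + 1) ∉ matchedBoxes M → r ≤ r') ∧
    D' = insert (r, c) (D.erase (r, c + 1))

/-!
Both pairings are bracket matchings. For the vertical `r`-pairing read, from left to right, the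
cells of row `r` as opening and those of row `r + 1` as closing brackets; for the horizontal
`c`-pairing read, from top to bottom, column `c` as opening and column `c + 1` as closing
brackets. A closing bracket is left unpaired exactly when every interval ending at it holds more
closing than opening brackets, and both operators move the last unpaired closing bracket onto
the opening line.

`𝚎̄_c` moves a cell of row `ρ` from column `c + 1` to column `c`. For the `r`-pairing this does
nothing unless `ρ ∈ {r, r + 1}`, and then it exchanges columns `c` and `c + 1` in one of the
two rows; the counting criterion shows that the unpaired columns are permuted by the same
transposition, which preserves their order because `c` and `c + 1` are never both unpaired.
The same holds for `e_r` seen from the `c`-pairing. So each operator changes the other's choice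
by at most a transposition: neither can kill the other, and the two composites agree cell by cell.
-/

open Finset Equiv

section CovBy

variable {α : Type*} [LinearOrder α]

lemma CovBy.Icc_right_eq_insert {k p n : α} (hpn : p ⋖ n) (hk : k ≤ n) :
    Set.Icc k n = insert n (Set.Icc k p) := by
  ext z
  simp only [Set.mem_Icc, Set.mem_insert_iff]
  constructor
  · rintro ⟨hkz, hzn⟩
    rcases hzn.lt_or_eq with hzn | rfl
    · exact Or.inr ⟨hkz, hpn.le_of_lt hzn⟩
    · exact Or.inl rfl
  · rintro (rfl | ⟨hkz, hzp⟩)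
    · exact ⟨hk, le_rfl⟩
    · exact ⟨hkz, hzp.trans hpn.le⟩

lemma CovBy.Icc_left_eq_insert {p n y : α} (hpn : p ⋖ n) (hy : p ≤ y) :
    Set.Icc p y = insert p (Set.Icc n y) := by
  ext z
  simp only [Set.mem_Icc, Set.mem_insert_iff]
  constructor
  · rintro ⟨hpz, hzy⟩
    rcases hpz.lt_or_eq with hpz | rfl
    · exact Or.inr ⟨hpn.ge_of_gt hpz, hzy⟩
    · exact Or.inl rfl
  · rintro (rfl | ⟨hnz, hzy⟩)
    · exact ⟨le_rfl, hy⟩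
    · exact ⟨hpn.le.trans hnz, hzy⟩

end CovBy

namespace Bracket

section Count

variable {α : Type*}

noncomputable def count (s : Finset α) (I : Set α) : ℕ := #{z ∈ s | z ∈ I}

lemma count_insert (s : Finset α) {I : Set α} {a : α} (ha : a ∉ I) :
    count s (insert a I) = count s I + if a ∈ s then 1 else 0 := by
  have hdisj : Disjoint {z ∈ s | z = a} {z ∈ s | z ∈ I} :=
    disjoint_filter.2 fun z _ hz hI => ha (hz ▸ hI)
  simp only [count, Set.mem_insert_iff, filter_or, card_union_of_disjoint hdisj, add_comm]
  congr 1
  split_ifs with has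
  · exact card_eq_one.2 ⟨a, by ext; simp only [mem_filter, mem_singleton]; grind⟩
  · exact card_eq_zero.2 (filter_eq_empty_iff.2 fun z hz h => has (h ▸ hz))

lemma count_eq_count_sdiff_add (s : Finset α) (I : Set α) (a : α) :
    count s I = count s (I \ {a}) + if a ∈ I ∧ a ∈ s then 1 else 0 := by
  by_cases haI : a ∈ I
  · conv_lhs => rw [← Set.insert_sdiff_self_of_mem haI]
    rw [count_insert s (fun h : a ∈ I \ {a} => h.2 rfl)]
    simp only [haI, true_and]
  · simp [Set.sdiff_singleton_eq_self haI, haI]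

lemma count_singleton (s : Finset α) (a : α) : count s {a} = if a ∈ s then 1 else 0 := by
  rw [count_eq_count_sdiff_add s {a} a, Set.sdiff_self]
  simp [count]

lemma count_mono (s : Finset α) {I J : Set α} (h : I ⊆ J) : count s I ≤ count s J :=
  card_le_card fun z hz => by simp only [mem_filter] at hz ⊢; exact ⟨hz.1, h hz.2⟩

/-- Exchanging the membership of `p` and `n` changes a count only through `p` and `n`. -/
lemma count_swap [DecidableEq α] {s s' : Finset α} {p n : α} (hpn : p ≠ n)
    (hs : ∀ z, z ∈ s' ↔ swap p n z ∈ s) (I : Set α) :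
    count s' I + (if p ∈ I ∧ p ∈ s then 1 else 0) + (if n ∈ I ∧ n ∈ s then 1 else 0) =
      count s I + (if p ∈ I ∧ n ∈ s then 1 else 0) + (if n ∈ I ∧ p ∈ s then 1 else 0) := by
  have hJ : count s' ((I \ {p}) \ {n}) = count s ((I \ {p}) \ {n}) := by
    unfold count
    congr 1
    ext z
    simp only [mem_filter, Set.mem_sdiff, Set.mem_singleton_iff]
    constructor <;> rintro ⟨hz, ⟨hI, hzp⟩, hzn⟩ <;>
      simp_all [swap_apply_of_ne_of_ne hzp hzn]
  have hnI : n ∈ I \ {p} ↔ n ∈ I := by simp [hpn.symm]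
  have hp : p ∈ s' ↔ n ∈ s := by rw [hs, swap_apply_left]
  have hn : n ∈ s' ↔ p ∈ s := by rw [hs, swap_apply_right]
  rw [count_eq_count_sdiff_add s' I p, count_eq_count_sdiff_add s I p,
    count_eq_count_sdiff_add s' _ n, count_eq_count_sdiff_add s _ n, hJ, hnI]
  by_cases p ∈ I <;> by_cases n ∈ I <;> by_cases p ∈ s <;> by_cases n ∈ s <;> simp_all

end Count

section Unpaired

variable {α : Type*} [LinearOrder α]

lemma count_Icc_eq_count_Ioc_add (s : Finset α) {k y : α} (hky : k ≤ y) :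
    count s (Set.Icc k y) = count s (Set.Ioc k y) + if k ∈ s then 1 else 0 := by
  rw [count_eq_count_sdiff_add s _ k, Set.Icc_sdiff_left]
  simp [hky]

lemma count_Icc_eq_count_Ico_add (s : Finset α) {k y : α} (hky : k ≤ y) :
    count s (Set.Icc k y) = count s (Set.Ico k y) + if y ∈ s then 1 else 0 := by
  rw [count_eq_count_sdiff_add s _ y, Set.Icc_sdiff_right]
  simp [hky]

/-- Reading the elements of `B` as opening and those of `A` as closing brackets (at a common
position the opening one first), `x` is an unmatched closing bracket. -/
def Unpaired (A B : Finset α) (x : α) : Prop :=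
  x ∈ A ∧ ∀ k ≤ x, count B (Set.Icc k x) < count A (Set.Icc k x)

variable {A B : Finset α} {x : α}

lemma Unpaired.notMem (h : Unpaired A B x) : x ∉ B := by
  intro hx
  have := h.2 x le_rfl
  simp only [Set.Icc_self, count_singleton, hx, h.1, if_true, lt_self_iff_false] at this

lemma Unpaired.count_Ioc_lt (h : Unpaired A B x) {k : α} (hk : k < x) :
    count B (Set.Ioc k x) < count A (Set.Ioc k x) := by
  set T := (A ∪ B).filter (· ∈ Set.Ioc k x)
  have hT : T.Nonempty := ⟨x, mem_filter.2 ⟨mem_union_left _ h.1, hk, le_rfl⟩⟩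
  have hm := mem_filter.1 (T.min'_mem hT)
  have hIoc : ∀ s ⊆ A ∪ B, count s (Set.Ioc k x) = count s (Set.Icc (T.min' hT) x) := by
    intro s hs
    unfold count
    congr 1
    ext z
    simp only [mem_filter]
    exact and_congr_right fun hz => ⟨fun hz' => ⟨T.min'_le z (mem_filter.2 ⟨hs hz, hz'⟩), hz'.2⟩,
      fun hz' => ⟨hm.2.1.trans_le hz'.1, hz'.2⟩⟩
  rw [hIoc A subset_union_left, hIoc B subset_union_right]
  exact h.2 _ hm.2.2

lemma Unpaired.mem_of_covBy (h : Unpaired A B x) {w : α} (hwx : w ⋖ x) (hw : w ∈ B) : w ∈ A := by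
  have := h.2 w hwx.le
  rw [hwx.Icc_left_eq_insert hwx.le, Set.Icc_self, count_insert _ (by simpa using hwx.ne),
    count_insert _ (by simpa using hwx.ne), count_singleton, count_singleton] at this
  by_contra hwA
  simp [hw, hwA, h.1, h.notMem] at this

lemma Unpaired.of_covBy (h : Unpaired A B x) {y : α} (hxy : x ⋖ y) (hy : y ∈ A) (hyB : y ∉ B) :
    Unpaired A B y := by
  refine ⟨hy, fun k hk => ?_⟩
  rcases hk.lt_or_eq with hk | rfl
  · have hkx := hxy.le_of_lt hk
    rw [hxy.Icc_right_eq_insert hk.le, count_insert _ (fun h' => hxy.lt.not_ge h'.2),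
      count_insert _ (fun h' => hxy.lt.not_ge h'.2)]
    simpa [hy, hyB] using Nat.lt_succ_of_lt (h.2 k hkx)
  · simp [count_singleton, hy, hyB]

end Unpaired

section Swap

variable {α : Type*} [LinearOrder α] {A B A' B' s s' : Finset α} {p n : α}

/-- An interval ending away from `p` and not starting at `n` contains both or neither. -/
lemma count_Icc_swap (hpn : p ⋖ n) (hs : ∀ z, z ∈ s' ↔ swap p n z ∈ s) {k y : α} (hyp : y ≠ p)
    (hkn : k ≠ n) : count s' (Set.Icc k y) = count s (Set.Icc k y) := by
  have hmem : p ∈ Set.Icc k y ↔ n ∈ Set.Icc k y := by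
    simp only [Set.mem_Icc]
    constructor
    · rintro ⟨hkp, hpy⟩
      exact ⟨hkp.trans hpn.le, hpn.ge_of_gt (hpy.lt_of_ne hyp.symm)⟩
    · rintro ⟨hkn', hny⟩
      exact ⟨hpn.le_of_lt (hkn'.lt_of_ne hkn), hpn.le.trans hny⟩
  have := count_swap hpn.ne hs (Set.Icc k y)
  by_cases hn : n ∈ Set.Icc k y <;> simp only [hmem, hn, true_and, false_and, if_false] at this
  · split_ifs at this <;> omega
  · omega

lemma Unpaired.swap_opening_of_eq_left (hpn : p ⋖ n) (hB : ∀ z, z ∈ B' ↔ swap p n z ∈ B)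
    (hxor : p ∈ B ↔ n ∉ B) (hA : p ∈ A → n ∈ A) (h : Unpaired A B p) : Unpaired A B' n := by
  have hpB := h.notMem
  have hnB : n ∈ B := by tauto
  have hnB' : n ∉ B' := by rw [hB, swap_apply_right]; exact hpB
  refine ⟨hA h.1, fun k hk => ?_⟩
  rcases hk.lt_or_eq with hk | rfl
  · have hkp := hpn.le_of_lt hk
    have hnp : n ∉ Set.Icc k p := fun h' => hpn.lt.not_ge h'.2
    have key := count_swap hpn.ne hB (Set.Icc k p)
    simp only [Set.mem_Icc, hkp, le_rfl, hnp, hpB, hnB, and_self, false_and, and_false, if_true,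
      if_false] at key
    have := h.2 k hkp
    rw [hpn.Icc_right_eq_insert hk.le, count_insert _ hnp, count_insert _ hnp]
    simp only [hnB', hA h.1, if_true, if_false]
    omega
  · simp [count_singleton, hnB', hA h.1]

lemma Unpaired.swap_opening_of_eq_right (hpn : p ⋖ n) (hB : ∀ z, z ∈ B' ↔ swap p n z ∈ B)
    (hxor : p ∈ B ↔ n ∉ B) (h : Unpaired A B n) : Unpaired A B' p := by
  have hnB := h.notMem
  have hpB : p ∈ B := by tauto
  have hnp : ∀ k, n ∉ Set.Icc k p := fun _ h' => hpn.lt.not_ge h'.2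
  have hpA : p ∈ A := by
    have := h.2 p hpn.le
    rw [hpn.Icc_left_eq_insert hpn.le, Set.Icc_self, count_insert _ (by simpa using hpn.ne),
      count_insert _ (by simpa using hpn.ne), count_singleton, count_singleton] at this
    by_contra hpA
    simp [hpB, hnB, hpA, h.1] at this
  refine ⟨hpA, fun k hk => ?_⟩
  have key := count_swap hpn.ne hB (Set.Icc k p)
  have := h.2 k (hk.trans hpn.le)
  rw [hpn.Icc_right_eq_insert (hk.trans hpn.le), count_insert _ (hnp k),
    count_insert _ (hnp k)] at this
  simp [hk, hnp k, hpB, hnB, h.1] at key this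
  omega

/-- Only the intervals starting at `n` see the exchange; for those, compare with the interval
starting at `p`. -/
lemma Unpaired.swap_opening_of_ne (hpn : p ⋖ n) (hB : ∀ z, z ∈ B' ↔ swap p n z ∈ B)
    (hxor : p ∈ B ↔ n ∉ B) (hA : p ∈ A → n ∈ A) {y : α} (hyp : y ≠ p) (hyn : y ≠ n)
    (h : Unpaired A B y) : Unpaired A B' y := by
  refine ⟨h.1, fun k hk => ?_⟩
  rcases eq_or_ne n k with rfl | hkn
  · have key := count_swap hpn.ne hB (Set.Icc n y)
    simp only [Set.mem_Icc, hk, le_rfl, true_and, and_true, hpn.lt.not_ge, false_and,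
      if_false] at key
    have hIoc := h.count_Ioc_lt (hk.lt_of_ne hyn.symm)
    have hpy := h.2 p (hpn.le.trans hk)
    rw [hpn.Icc_left_eq_insert (hpn.le.trans hk), count_insert _ (fun h' => hpn.lt.not_ge h'.1),
      count_insert _ (fun h' => hpn.lt.not_ge h'.1)] at hpy
    rw [count_Icc_eq_count_Ioc_add A hk] at hpy ⊢
    rw [count_Icc_eq_count_Ioc_add B hk] at hpy key
    by_cases hpB : p ∈ B
    · have hnB : n ∉ B := hxor.1 hpB
      by_cases hpA : p ∈ A
      · simp [hpB, hnB, hpA, hA hpA] at hpy key ⊢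
        omega
      · simp [hpB, hnB, hpA] at hpy key ⊢
        omega
    · simp only [hpB, if_false] at key
      split_ifs at key ⊢ <;> omega
  · rw [count_Icc_swap hpn hB hyp hkn.symm]
    exact h.2 k hk

lemma Unpaired.swap_opening (hpn : p ⋖ n) (hB : ∀ z, z ∈ B' ↔ swap p n z ∈ B)
    (hxor : p ∈ B ↔ n ∉ B) (hA : p ∈ A → n ∈ A) {y : α} (h : Unpaired A B y) :
    Unpaired A B' (swap p n y) := by
  rcases eq_or_ne y p with rfl | hyp
  · simpa using h.swap_opening_of_eq_left hpn hB hxor hA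
  rcases eq_or_ne y n with rfl | hyn
  · simpa using h.swap_opening_of_eq_right hpn hB hxor
  · simpa [swap_apply_of_ne_of_ne hyp hyn] using h.swap_opening_of_ne hpn hB hxor hA hyp hyn

lemma Unpaired.swap_closing_of_eq_left (hpn : p ⋖ n) (hA : ∀ z, z ∈ A' ↔ swap p n z ∈ A)
    (hxor : p ∈ A ↔ n ∉ A) (hB : n ∈ B → p ∈ B) (h : Unpaired A B p) : Unpaired A' B n := by
  have hnA : n ∉ A := hxor.1 h.1
  have hpB := h.notMem
  have hnB : n ∉ B := fun hnB => hpB (hB hnB)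
  have hnA' : n ∈ A' := by rw [hA, swap_apply_right]; exact h.1
  refine ⟨hnA', fun k hk => ?_⟩
  rcases hk.lt_or_eq with hk | rfl
  · have hkp := hpn.le_of_lt hk
    have hnp : n ∉ Set.Icc k p := fun h' => hpn.lt.not_ge h'.2
    have key := count_swap hpn.ne hA (Set.Icc k p)
    simp only [Set.mem_Icc, hkp, le_rfl, hnp, h.1, hnA, and_self, false_and, and_false,
      if_true, if_false] at key
    have := h.2 k hkp
    rw [hpn.Icc_right_eq_insert hk.le, count_insert _ hnp, count_insert _ hnp]
    simp only [hnA', hnB, if_true, if_false]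
    omega
  · simp [count_singleton, hnA', hnB]

lemma Unpaired.swap_closing_of_eq_right (hpn : p ⋖ n) (hA : ∀ z, z ∈ A' ↔ swap p n z ∈ A)
    (hxor : p ∈ A ↔ n ∉ A) (h : Unpaired A B n) : Unpaired A' B p := by
  have hpA : p ∉ A := fun hpA => hxor.1 hpA h.1
  have hnB := h.notMem
  have hnp : ∀ k, n ∉ Set.Icc k p := fun _ h' => hpn.lt.not_ge h'.2
  refine ⟨by rw [hA, swap_apply_left]; exact h.1, fun k hk => ?_⟩
  have key := count_swap hpn.ne hA (Set.Icc k p)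
  have := h.2 k (hk.trans hpn.le)
  rw [hpn.Icc_right_eq_insert (hk.trans hpn.le), count_insert _ (hnp k),
    count_insert _ (hnp k)] at this
  simp [hk, hnp k, hpA, hnB, h.1] at key this
  omega

lemma Unpaired.swap_closing_of_ne (hpn : p ⋖ n) (hA : ∀ z, z ∈ A' ↔ swap p n z ∈ A)
    (hxor : p ∈ A ↔ n ∉ A) (hB : n ∈ B → p ∈ B) {y : α} (hyp : y ≠ p) (hyn : y ≠ n)
    (h : Unpaired A B y) : Unpaired A' B y := by
  refine ⟨(hA y).2 (by rw [swap_apply_of_ne_of_ne hyp hyn]; exact h.1), fun k hk => ?_⟩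
  rcases eq_or_ne n k with rfl | hkn
  · have key := count_swap hpn.ne hA (Set.Icc n y)
    simp only [Set.mem_Icc, hk, le_rfl, true_and, and_true, hpn.lt.not_ge, false_and,
      if_false] at key
    have hIoc := h.count_Ioc_lt (hk.lt_of_ne hyn.symm)
    have hny := h.2 n hk
    have hpy := h.2 p (hpn.le.trans hk)
    rw [hpn.Icc_left_eq_insert (hpn.le.trans hk), count_insert _ (fun h' => hpn.lt.not_ge h'.1),
      count_insert _ (fun h' => hpn.lt.not_ge h'.1)] at hpy
    rw [count_Icc_eq_count_Ioc_add A hk] at hpy key hny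
    rw [count_Icc_eq_count_Ioc_add B hk] at hpy hny ⊢
    by_cases hpA : p ∈ A
    · simp only [hpA, hxor.1 hpA, if_true, if_false] at key hpy hny
      omega
    · have hnA : n ∈ A := by tauto
      by_cases hnB : n ∈ B
      · simp only [hpA, hnA, hnB, hB hnB, if_true, if_false] at key hpy ⊢
        omega
      · simp only [hpA, hnA, hnB, if_true, if_false] at key ⊢
        omega
  · rw [count_Icc_swap hpn hA hyp hkn.symm]
    exact h.2 k hk

lemma Unpaired.swap_closing (hpn : p ⋖ n) (hA : ∀ z, z ∈ A' ↔ swap p n z ∈ A)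
    (hxor : p ∈ A ↔ n ∉ A) (hB : n ∈ B → p ∈ B) {y : α} (h : Unpaired A B y) :
    Unpaired A' B (swap p n y) := by
  rcases eq_or_ne y p with rfl | hyp
  · simpa using h.swap_closing_of_eq_left hpn hA hxor hB
  rcases eq_or_ne y n with rfl | hyn
  · simpa using h.swap_closing_of_eq_right hpn hA hxor
  · simpa [swap_apply_of_ne_of_ne hyp hyn] using h.swap_closing_of_ne hpn hA hxor hB hyp hyn

theorem unpaired_swap_opening_iff (hpn : p ⋖ n) (hB : ∀ z, z ∈ B' ↔ swap p n z ∈ B)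
    (hxor : p ∈ B ↔ n ∉ B) (hA : p ∈ A → n ∈ A) (x : α) :
    Unpaired A B' x ↔ Unpaired A B (swap p n x) := by
  have hB' : ∀ z, z ∈ B ↔ swap p n z ∈ B' := fun z => by rw [hB, swap_apply_self]
  have hxor' : p ∈ B' ↔ n ∉ B' := by rw [hB, hB, swap_apply_left, swap_apply_right]; tauto
  refine ⟨fun h => h.swap_opening hpn hB' hxor' hA, fun h => ?_⟩
  simpa using h.swap_opening hpn hB hxor hA

theorem unpaired_swap_closing_iff (hpn : p ⋖ n) (hA : ∀ z, z ∈ A' ↔ swap p n z ∈ A)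
    (hxor : p ∈ A ↔ n ∉ A) (hB : n ∈ B → p ∈ B) (x : α) :
    Unpaired A' B x ↔ Unpaired A B (swap p n x) := by
  have hA' : ∀ z, z ∈ A ↔ swap p n z ∈ A' := fun z => by rw [hA, swap_apply_self]
  have hxor' : p ∈ A' ↔ n ∉ A' := by rw [hA, hA, swap_apply_left, swap_apply_right]; tauto
  refine ⟨fun h => h.swap_closing hpn hA' hxor' hB, fun h => ?_⟩
  simpa using h.swap_closing hpn hA hxor hB

lemma isGreatest_preimage_swap {s : Set α} {g : α} (hpn : p ⋖ n) (hs : ¬(p ∈ s ∧ n ∈ s))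
    (hg : IsGreatest s g) :
    IsGreatest (swap p n ⁻¹' s) (swap p n g) := by
  refine ⟨by simpa using hg.1, fun z hz => ?_⟩
  have hzg : swap p n z ≤ g := hg.2 hz
  rcases eq_or_ne z p with rfl | hzp
  · rcases eq_or_ne g z with rfl | hgp
    · simpa using hpn.le
    rcases eq_or_ne g n with rfl | hgn
    · simp
    · rw [swap_apply_of_ne_of_ne hgp hgn]; exact hpn.le.trans (by simpa using hzg)
  rcases eq_or_ne z n with rfl | hzn
  · rcases eq_or_ne g p with rfl | hgp
    · simp
    rcases eq_or_ne g z with rfl | hgn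
    · simp at hz; exact absurd ⟨hz, hg.1⟩ hs
    · rw [swap_apply_of_ne_of_ne hgp hgn]
      simp only [swap_apply_right] at hzg
      exact hpn.ge_of_gt (hzg.lt_of_ne (Ne.symm hgp))
  rw [swap_apply_of_ne_of_ne hzp hzn] at hzg
  rcases eq_or_ne g p with rfl | hgp
  · simpa using hzg.trans hpn.le
  rcases eq_or_ne g n with rfl | hgn
  · simpa using hpn.le_of_lt (hzg.lt_of_ne hzn)
  · rwa [swap_apply_of_ne_of_ne hgp hgn]

end Swap

end Bracket

open Bracket

/-- Two parallel lines of cells indexed by a linear order: `upper x` may be paired with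
`lower y` when `y ≤ x`. -/
structure Strip (α : Type*) where
  upper : α ↪ ℕ × ℕ
  lower : α ↪ ℕ × ℕ
  upper_ne_lower : ∀ x y, upper x ≠ lower y

lemma mem_matchedBoxes {M : Finset ((ℕ × ℕ) × (ℕ × ℕ))} {b : ℕ × ℕ} :
    b ∈ matchedBoxes M ↔ ∃ q ∈ M, q.1 = b ∨ q.2 = b := by
  simp only [matchedBoxes, mem_union, mem_image]
  constructor
  · rintro (⟨q, hq, rfl⟩ | ⟨q, hq, rfl⟩)
    exacts [⟨q, hq, Or.inl rfl⟩, ⟨q, hq, Or.inr rfl⟩]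
  · rintro ⟨q, hq, rfl | rfl⟩
    exacts [Or.inl ⟨q, hq, rfl⟩, Or.inr ⟨q, hq, rfl⟩]

lemma matchedBoxes_mono {M M' : Finset ((ℕ × ℕ) × (ℕ × ℕ))} (h : M ⊆ M') :
    matchedBoxes M ⊆ matchedBoxes M' := fun _ hb =>
  let ⟨q, hq, hb⟩ := mem_matchedBoxes.1 hb
  mem_matchedBoxes.2 ⟨q, h hq, hb⟩

namespace Strip

section Cells

variable {α : Type*} (S : Strip α) (D : Finset (ℕ × ℕ))

noncomputable def uppers : Finset α := D.preimage S.upper S.upper.injective.injOn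

noncomputable def lowers : Finset α := D.preimage S.lower S.lower.injective.injOn

def shift (x : α) : Finset (ℕ × ℕ) := insert (S.lower x) (D.erase (S.upper x))

variable {S D}

@[simp] lemma mem_uppers {x : α} : x ∈ S.uppers D ↔ S.upper x ∈ D := mem_preimage

@[simp] lemma mem_lowers {x : α} : x ∈ S.lowers D ↔ S.lower x ∈ D := mem_preimage

lemma pair_inj {x y x' y' : α} :
    (S.upper x, S.lower y) = (S.upper x', S.lower y') ↔ x = x' ∧ y = y' := by
  simp

end Cells

section Pairing

variable {α : Type*} [LinearOrder α] (S : Strip α) (D : Finset (ℕ × ℕ))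

def IsUnpaired (x : α) : Prop := Bracket.Unpaired (S.uppers D) (S.lowers D) x

def PairedBetween (M : Finset ((ℕ × ℕ) × (ℕ × ℕ))) (y x : α) : Prop :=
  ∀ z, y < z → z < x → (S.upper z ∈ D → S.upper z ∈ matchedBoxes M) ∧
    (S.lower z ∈ D → S.lower z ∈ matchedBoxes M)

def Step (M M' : Finset ((ℕ × ℕ) × (ℕ × ℕ))) : Prop :=
  ∃ x y, S.upper x ∈ D ∧ S.lower y ∈ D ∧ y < x ∧ S.upper x ∉ matchedBoxes M ∧
    S.lower y ∉ matchedBoxes M ∧ S.PairedBetween D M y x ∧ M' = insert (S.upper x, S.lower y) M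

def IsInitial (M₀ : Finset ((ℕ × ℕ) × (ℕ × ℕ))) : Prop :=
  ∀ q, q ∈ M₀ ↔ ∃ x, S.upper x ∈ D ∧ S.lower x ∈ D ∧ q = (S.upper x, S.lower x)

def IsPairing (M₀ M : Finset ((ℕ × ℕ) × (ℕ × ℕ))) : Prop :=
  Relation.ReflTransGen (S.Step D) M₀ M ∧ ∀ M', ¬ S.Step D M M'

structure IsPartialPairing (M : Finset ((ℕ × ℕ) × (ℕ × ℕ))) : Prop where
  mem : ∀ q ∈ M, ∃ x y, q = (S.upper x, S.lower y) ∧ S.upper x ∈ D ∧ S.lower y ∈ D ∧ y ≤ x ∧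
    S.PairedBetween D M y x
  fst_inj : ∀ q ∈ M, ∀ q' ∈ M, q.1 = q'.1 → q = q'
  snd_inj : ∀ q ∈ M, ∀ q' ∈ M, q.2 = q'.2 → q = q'
  not_cross : ∀ x y x' y', (S.upper x, S.lower y) ∈ M → (S.upper x', S.lower y') ∈ M →
    y < y' → y' ≤ x → x < x' → False
  diag : ∀ x, S.upper x ∈ D → S.lower x ∈ D → (S.upper x, S.lower x) ∈ M

variable {S D} {M₀ M M' : Finset ((ℕ × ℕ) × (ℕ × ℕ))}

lemma PairedBetween.mono (h : M ⊆ M') {y x : α} (hM : S.PairedBetween D M y x) :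
    S.PairedBetween D M' y x := fun z h₁ h₂ =>
  ⟨fun hz => matchedBoxes_mono h ((hM z h₁ h₂).1 hz),
    fun hz => matchedBoxes_mono h ((hM z h₁ h₂).2 hz)⟩

lemma IsInitial.isPartialPairing (h₀ : S.IsInitial D M₀) : S.IsPartialPairing D M₀ where
  mem q hq := by
    obtain ⟨x, hx, hx', rfl⟩ := (h₀ q).1 hq
    exact ⟨x, x, rfl, hx, hx', le_rfl, fun z h₁ h₂ => absurd (h₁.trans h₂) (lt_irrefl x)⟩
  fst_inj q hq q' hq' h := by
    obtain ⟨x, -, -, rfl⟩ := (h₀ q).1 hq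
    obtain ⟨x', -, -, rfl⟩ := (h₀ q').1 hq'
    simp_all
  snd_inj q hq q' hq' h := by
    obtain ⟨x, -, -, rfl⟩ := (h₀ q).1 hq
    obtain ⟨x', -, -, rfl⟩ := (h₀ q').1 hq'
    simp_all
  not_cross x y x' y' h h' h₁ h₂ h₃ := by
    obtain ⟨a, -, -, ha⟩ := (h₀ _).1 h
    obtain ⟨b, -, -, hb⟩ := (h₀ _).1 h'
    rw [pair_inj] at ha hb
    obtain ⟨rfl, rfl⟩ := ha
    obtain ⟨rfl, rfl⟩ := hb
    exact absurd (h₁.trans_le h₂) (lt_irrefl _)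
  diag x hx hx' := (h₀ _).2 ⟨x, hx, hx', rfl⟩

lemma IsPartialPairing.exists_of_upper_mem (hM : S.IsPartialPairing D M) {x : α}
    (h : S.upper x ∈ matchedBoxes M) : ∃ y, (S.upper x, S.lower y) ∈ M := by
  obtain ⟨q, hq, h⟩ := mem_matchedBoxes.1 h
  obtain ⟨a, b, rfl, -⟩ := hM.mem q hq
  rcases h with h | h
  · rw [S.upper.injective h] at hq
    exact ⟨b, hq⟩
  · exact absurd h.symm (S.upper_ne_lower x b)

lemma IsPartialPairing.exists_of_lower_mem (hM : S.IsPartialPairing D M) {y : α}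
    (h : S.lower y ∈ matchedBoxes M) : ∃ x, (S.upper x, S.lower y) ∈ M := by
  obtain ⟨q, hq, h⟩ := mem_matchedBoxes.1 h
  obtain ⟨a, b, rfl, -⟩ := hM.mem q hq
  rcases h with h | h
  · exact absurd h (S.upper_ne_lower a y)
  · rw [S.lower.injective h] at hq
    exact ⟨a, hq⟩

lemma IsPartialPairing.step (hM : S.IsPartialPairing D M) (hs : S.Step D M M') :
    S.IsPartialPairing D M' := by
  obtain ⟨x, y, hx, hy, hyx, hxM, hyM, hbet, rfl⟩ := hs
  have hsub : M ⊆ insert (S.upper x, S.lower y) M := subset_insert _ _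
  have hfst : ∀ q ∈ M, q.1 ≠ S.upper x := fun q hq h =>
    hxM (mem_matchedBoxes.2 ⟨q, hq, Or.inl h⟩)
  have hsnd : ∀ q ∈ M, q.2 ≠ S.lower y := fun q hq h =>
    hyM (mem_matchedBoxes.2 ⟨q, hq, Or.inr h⟩)
  refine ⟨fun q hq => ?_, fun q hq q' hq' h => ?_, fun q hq q' hq' h => ?_,
    fun a b a' b' h h' h₁ h₂ h₃ => ?_, fun z hz hz' => hsub (hM.diag z hz hz')⟩
  · rcases mem_insert.1 hq with rfl | hq
    · exact ⟨x, y, rfl, hx, hy, hyx.le, hbet.mono hsub⟩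
    · obtain ⟨a, b, rfl, ha, hb, hba, hab⟩ := hM.mem q hq
      exact ⟨a, b, rfl, ha, hb, hba, hab.mono hsub⟩
  · rcases mem_insert.1 hq with rfl | hq <;> rcases mem_insert.1 hq' with rfl | hq'
    exacts [rfl, absurd h.symm (hfst q' hq'), absurd h (hfst q hq), hM.fst_inj q hq q' hq' h]
  · rcases mem_insert.1 hq with rfl | hq <;> rcases mem_insert.1 hq' with rfl | hq'
    exacts [rfl, absurd h.symm (hsnd q' hq'), absurd h (hsnd q hq), hM.snd_inj q hq q' hq' h]
  -- a crossing between the new pair and an old one would put an unmatched cell of the new pair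
  -- inside the span of the old one, where every cell is matched
  rcases mem_insert.1 h with hn | ho <;> rcases mem_insert.1 h' with hn' | ho'
  · rw [pair_inj] at hn hn'
    exact absurd (hn.2 ▸ hn'.2 ▸ h₁) (lt_irrefl _)
  · obtain ⟨rfl, rfl⟩ := pair_inj.1 hn
    obtain ⟨_, _, he, -, hb', -, hbet'⟩ := hM.mem _ ho'
    obtain ⟨rfl, rfl⟩ := pair_inj.1 he
    rcases h₂.lt_or_eq with h₂ | rfl
    · exact hxM ((hbet' a h₂ h₃).1 hx)
    · exact hxM (mem_matchedBoxes.2 ⟨_, hM.diag _ hx hb', Or.inl rfl⟩)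
  · obtain ⟨rfl, rfl⟩ := pair_inj.1 hn'
    obtain ⟨_, _, he, ha, -, -, hbet'⟩ := hM.mem _ ho
    obtain ⟨rfl, rfl⟩ := pair_inj.1 he
    rcases h₂.lt_or_eq with h₂ | rfl
    · exact hyM ((hbet' b' h₁ h₂).2 hy)
    · exact hyM (mem_matchedBoxes.2 ⟨_, hM.diag _ ha hy, Or.inr rfl⟩)
  · exact hM.not_cross a b a' b' ho ho' h₁ h₂ h₃

lemma IsInitial.isPartialPairing_of_reflTransGen (h₀ : S.IsInitial D M₀)
    (h : Relation.ReflTransGen (S.Step D) M₀ M) : S.IsPartialPairing D M := by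
  induction h with
  | refl => exact h₀.isPartialPairing
  | tail _ hs ih => exact ih.step hs

end Pairing

section Characterization

variable {α : Type*} [LinearOrder α] {S : Strip α} {D : Finset (ℕ × ℕ)}
  {M₀ M : Finset ((ℕ × ℕ) × (ℕ × ℕ))}

/-- The upper cells strictly inside the span of a pair are matched inside that span. -/
lemma IsPartialPairing.count_uppers_Ioc_le (hM : S.IsPartialPairing D M) {x y : α}
    (hxy : (S.upper x, S.lower y) ∈ M) :
    count (S.uppers D) (Set.Ioc y x) ≤ count (S.lowers D) (Set.Icc y x) := by
  obtain ⟨_, _, he, -, -, -, hbet⟩ := hM.mem _ hxy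
  obtain ⟨rfl, rfl⟩ := pair_inj.1 he
  refine card_le_card_of_forall_subsingleton (fun z w => (S.upper z, S.lower w) ∈ M)
    (fun z hz => ?_) (fun w _ z₁ hz₁ z₂ hz₂ => ?_)
  · simp only [mem_filter, mem_uppers, Set.mem_Ioc] at hz
    obtain ⟨hzD, hyz, hzx⟩ := hz
    obtain ⟨w, hzw⟩ : ∃ w, (S.upper z, S.lower w) ∈ M := by
      rcases hzx.lt_or_eq with hzx | rfl
      exacts [hM.exists_of_upper_mem ((hbet z hyz hzx).1 hzD), ⟨y, hxy⟩]
    obtain ⟨_, _, he, -, hw, hwz, -⟩ := hM.mem _ hzw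
    obtain ⟨rfl, rfl⟩ := pair_inj.1 he
    refine ⟨w, ?_, hzw⟩
    simp only [mem_filter, mem_lowers, Set.mem_Icc]
    refine ⟨hw, not_lt.1 fun hwy => ?_, hwz.trans hzx⟩
    rcases hzx.lt_or_eq with hzx | rfl
    · exact hM.not_cross z w x y hzw hxy hwy hyz.le hzx
    · exact hwy.ne (pair_inj.1 (hM.fst_inj _ hzw _ hxy rfl)).2
  · exact (pair_inj.1 (hM.snd_inj _ hz₁.2 _ hz₂.2 rfl)).1

lemma IsPartialPairing.upper_notMem_of_isUnpaired (hM : S.IsPartialPairing D M) {x : α}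
    (h : S.IsUnpaired D x) : S.upper x ∉ matchedBoxes M := by
  intro hx
  obtain ⟨y, hxy⟩ := hM.exists_of_upper_mem hx
  obtain ⟨_, _, he, -, hy, hyx, -⟩ := hM.mem _ hxy
  obtain ⟨rfl, rfl⟩ := pair_inj.1 he
  rcases hyx.lt_or_eq with hyx | rfl
  · have hcount := h.2 y hyx.le
    rw [count_Icc_eq_count_Ioc_add (S.uppers D) hyx.le] at hcount
    have hle := hM.count_uppers_Ioc_le hxy
    split_ifs at hcount with hyU
    · have hdiag := hM.diag y (mem_uppers.1 hyU) hy
      exact hyx.ne (pair_inj.1 (hM.snd_inj _ hdiag _ hxy rfl)).1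
    · omega
  · exact h.notMem (mem_lowers.2 hy)

/-- If an unmatched lower cell `y` preceded an unmatched upper cell `x`, some unmatched cell
strictly between them would give a closer such pair, and the closest one would admit a `Step`. -/
lemma le_of_not_step (hP : ∀ M', ¬ S.Step D M M') {x y : α} (hx : S.upper x ∈ D)
    (hxM : S.upper x ∉ matchedBoxes M) (hy : S.lower y ∈ D) (hyM : S.lower y ∉ matchedBoxes M) :
    x ≤ y := by
  obtain ⟨N, hN⟩ : ∃ N, count (S.uppers D ∪ S.lowers D) (Set.Ioo y x) = N := ⟨_, rfl⟩
  induction N using Nat.strong_induction_on generalizing x y with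
  | _ N ih =>
  refine not_lt.1 fun hyx => ?_
  by_cases hbet : S.PairedBetween D M y x
  · exact hP _ ⟨x, y, hx, hy, hyx, hxM, hyM, hbet, rfl⟩
  simp only [PairedBetween, not_forall, not_and_or] at hbet
  obtain ⟨z, hyz, hzx, hz⟩ := hbet
  have hlt : ∀ {y' x'}, Set.Ioo y' x' ⊆ Set.Ioo y x → z ∉ Set.Ioo y' x' →
      z ∈ S.uppers D ∪ S.lowers D → count (S.uppers D ∪ S.lowers D) (Set.Ioo y' x') < N :=
    fun hsub hz' hzU => by
      rw [← hN]
      refine lt_of_lt_of_le ?_ (count_mono _ (Set.insert_subset ⟨hyz, hzx⟩ hsub))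
      rw [count_insert _ hz', if_pos hzU]
      exact Nat.lt_succ_self _
  rcases hz with ⟨hzD, hzM⟩ | ⟨hzD, hzM⟩
  · exact ih _ (hlt (Set.Ioo_subset_Ioo_right hzx.le) (fun h => lt_irrefl z h.2)
      (mem_union_left _ (mem_uppers.2 hzD))) hzD hzM hy hyM rfl |>.not_gt hyz
  · exact ih _ (hlt (Set.Ioo_subset_Ioo_left hyz.le) (fun h => lt_irrefl z h.1)
      (mem_union_right _ (mem_lowers.2 hzD))) hx hxM hzD hzM rfl |>.not_gt hzx

/-- Lower cells of `[k, x]` matched while `x` is not can only be matched inside `[k, x)`. -/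
lemma IsPartialPairing.count_lowers_Icc_le (hM : S.IsPartialPairing D M) {k x : α}
    (hx : S.upper x ∈ D) (hxM : S.upper x ∉ matchedBoxes M)
    (hall : ∀ w, S.lower w ∈ D → k ≤ w → w ≤ x → S.lower w ∈ matchedBoxes M) :
    count (S.lowers D) (Set.Icc k x) ≤ count (S.uppers D) (Set.Ico k x) := by
  refine card_le_card_of_forall_subsingleton (fun w z => (S.upper z, S.lower w) ∈ M)
    (fun w hw => ?_) (fun z _ w₁ hw₁ w₂ hw₂ => ?_)
  · simp only [mem_filter, mem_lowers, Set.mem_Icc] at hw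
    obtain ⟨hwD, hkw, hwx⟩ := hw
    obtain ⟨z, hzw⟩ := hM.exists_of_lower_mem (hall w hwD hkw hwx)
    obtain ⟨_, _, he, hz, -, hwz, hbet⟩ := hM.mem _ hzw
    obtain ⟨rfl, rfl⟩ := pair_inj.1 he
    have hzx : z < x := by
      refine lt_of_le_of_ne (not_lt.1 fun hxz => ?_) fun hzx => ?_
      · rcases hwx.lt_or_eq with hwx | rfl
        · exact hxM ((hbet x hwx hxz).1 hx)
        · exact hxM (mem_matchedBoxes.2 ⟨_, hM.diag _ hx hwD, Or.inl rfl⟩)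
      · exact hxM (mem_matchedBoxes.2 ⟨_, hzx ▸ hzw, Or.inl rfl⟩)
    refine ⟨z, ?_, hzw⟩
    simp only [mem_filter, mem_uppers, Set.mem_Ico]
    exact ⟨hz, hkw.trans hwz, hzx⟩
  · exact (pair_inj.1 (hM.fst_inj _ hw₁.2 _ hw₂.2 rfl)).2

lemma IsPairing.isUnpaired (h₀ : S.IsInitial D M₀) (hP : S.IsPairing D M₀ M) {x : α}
    (hx : S.upper x ∈ D) (hxM : S.upper x ∉ matchedBoxes M) : S.IsUnpaired D x := by
  have hM := h₀.isPartialPairing_of_reflTransGen hP.1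
  refine ⟨mem_uppers.2 hx, fun k hk => not_le.1 fun hle => ?_⟩
  obtain ⟨y, hy, hky, hyx, hyM⟩ :
      ∃ y, S.lower y ∈ D ∧ k ≤ y ∧ y ≤ x ∧ S.lower y ∉ matchedBoxes M := by
    by_contra! hall
    have := hM.count_lowers_Icc_le hx hxM hall
    rw [count_Icc_eq_count_Ico_add _ hk, if_pos (mem_uppers.2 hx)] at hle
    omega
  rcases hyx.lt_or_eq with hyx | rfl
  · exact (le_of_not_step hP.2 hx hxM hy hyM).not_gt hyx
  · exact hxM (mem_matchedBoxes.2 ⟨_, hM.diag _ hx hy, Or.inl rfl⟩)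

lemma IsInitial.exists_isPairing (h₀ : S.IsInitial D M₀) : ∃ M, S.IsPairing D M₀ M := by
  have hsub₀ : M₀ ⊆ D ×ˢ D := fun q hq => by
    obtain ⟨x, hx, hx', rfl⟩ := (h₀ q).1 hq
    exact mem_product.2 ⟨hx, hx'⟩
  suffices ∀ N M, Relation.ReflTransGen (S.Step D) M₀ M → M ⊆ D ×ˢ D →
      #(D ×ˢ D) - #M = N → ∃ M', S.IsPairing D M₀ M' from this _ M₀ .refl hsub₀ rfl
  intro N
  induction N using Nat.strong_induction_on with
  | _ N ih =>
  intro M hM hsub hN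
  by_cases hs : ∃ M', S.Step D M M'
  · obtain ⟨M', hs⟩ := hs
    obtain ⟨x, y, hx, hy, -, hxM, -, -, hM'⟩ := id hs
    have hnot : (S.upper x, S.lower y) ∉ M := fun h =>
      hxM (mem_matchedBoxes.2 ⟨_, h, Or.inl rfl⟩)
    have hsub' : M' ⊆ D ×ˢ D := hM' ▸ insert_subset (mem_product.2 ⟨hx, hy⟩) hsub
    have hcard := card_le_card hsub'
    rw [hM', card_insert_of_notMem hnot] at hcard
    exact ih _ (by rw [hM', card_insert_of_notMem hnot]; omega) M' (hM.tail hs) hsub' rfl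
  · exact ⟨M, hM, fun M' h => hs ⟨M', h⟩⟩

end Characterization

section Operator

variable {α : Type*} [LinearOrder α] (S : Strip α) (D : Finset (ℕ × ℕ))

/-- The operator of the strip; `RaiseRel` and `RectRel` are its two instances. -/
def ShiftRel (M₀ : Finset ((ℕ × ℕ) × (ℕ × ℕ))) (E : Finset (ℕ × ℕ)) : Prop :=
  ∃ M x, S.IsPairing D M₀ M ∧ S.upper x ∈ D ∧ S.upper x ∉ matchedBoxes M ∧
    (∀ x', S.upper x' ∈ D → S.upper x' ∉ matchedBoxes M → x' ≤ x) ∧ E = S.shift D x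

variable {S D} {M₀ : Finset ((ℕ × ℕ) × (ℕ × ℕ))}

lemma IsPairing.unmatched_iff_isUnpaired (h₀ : S.IsInitial D M₀) {M} (hP : S.IsPairing D M₀ M)
    (x : α) : S.upper x ∈ D ∧ S.upper x ∉ matchedBoxes M ↔ S.IsUnpaired D x :=
  ⟨fun h => hP.isUnpaired h₀ h.1 h.2, fun h => ⟨mem_uppers.1 h.1,
    (h₀.isPartialPairing_of_reflTransGen hP.1).upper_notMem_of_isUnpaired h⟩⟩

theorem shiftRel_iff (h₀ : S.IsInitial D M₀) {E : Finset (ℕ × ℕ)} :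
    S.ShiftRel D M₀ E ↔ ∃ g, IsGreatest {x | S.IsUnpaired D x} g ∧ E = S.shift D g := by
  constructor
  · rintro ⟨M, g, hP, hg, hgM, hmax, rfl⟩
    have key := hP.unmatched_iff_isUnpaired h₀
    exact ⟨g, ⟨(key g).1 ⟨hg, hgM⟩, fun x hx => hmax x ((key x).2 hx).1 ((key x).2 hx).2⟩, rfl⟩
  · rintro ⟨g, hg, rfl⟩
    obtain ⟨M, hP⟩ := h₀.exists_isPairing
    have key := hP.unmatched_iff_isUnpaired h₀
    exact ⟨M, g, hP, ((key g).2 hg.1).1, ((key g).2 hg.1).2,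
      fun x hx hxM => hg.2 ((key x).1 ⟨hx, hxM⟩), rfl⟩

lemma exists_isGreatest_isUnpaired {x : α} (hx : S.IsUnpaired D x) :
    ∃ g, IsGreatest {x | S.IsUnpaired D x} g := by
  set T := {z ∈ S.uppers D | S.IsUnpaired D z}
  have hT : T.Nonempty := ⟨x, mem_filter.2 ⟨hx.1, hx⟩⟩
  exact ⟨T.max' hT, (mem_filter.1 (T.max'_mem hT)).2,
    fun z hz => T.le_max' z (mem_filter.2 ⟨hz.1, hz⟩)⟩

theorem exists_shiftRel_iff (h₀ : S.IsInitial D M₀) :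
    (∃ E, S.ShiftRel D M₀ E) ↔ ∃ x, S.IsUnpaired D x := by
  simp only [shiftRel_iff h₀]
  constructor
  · rintro ⟨E, g, hg, -⟩
    exact ⟨g, hg.1⟩
  · rintro ⟨x, hx⟩
    obtain ⟨g, hg⟩ := exists_isGreatest_isUnpaired hx
    exact ⟨_, g, hg, rfl⟩

end Operator

section Moves

variable {α : Type*} {S : Strip α} {D : Finset (ℕ × ℕ)}

lemma uppers_insert_erase {a b : ℕ × ℕ} (ha : ∀ z, S.upper z ≠ a) (hb : ∀ z, S.upper z ≠ b) :
    S.uppers (insert a (D.erase b)) = S.uppers D := by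
  ext z
  simp [ha z, hb z]

lemma lowers_insert_erase {a b : ℕ × ℕ} (ha : ∀ z, S.lower z ≠ a) (hb : ∀ z, S.lower z ≠ b) :
    S.lowers (insert a (D.erase b)) = S.lowers D := by
  ext z
  simp [ha z, hb z]

lemma isUnpaired_insert_erase [LinearOrder α] {a b : ℕ × ℕ}
    (ha : ∀ z, S.upper z ≠ a ∧ S.lower z ≠ a) (hb : ∀ z, S.upper z ≠ b ∧ S.lower z ≠ b) :
    S.IsUnpaired (insert a (D.erase b)) = S.IsUnpaired D := by
  unfold IsUnpaired
  rw [uppers_insert_erase (fun z => (ha z).1) (fun z => (hb z).1),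
    lowers_insert_erase (fun z => (ha z).2) (fun z => (hb z).2)]

lemma mem_uppers_insert_erase_upper [DecidableEq α] {p n : α} (hp : S.upper p ∉ D)
    (hn : S.upper n ∈ D) (z : α) :
    z ∈ S.uppers (insert (S.upper p) (D.erase (S.upper n))) ↔ swap p n z ∈ S.uppers D := by
  rcases eq_or_ne z p with rfl | hzp
  · simp [hn]
  rcases eq_or_ne z n with rfl | hzn
  · simp [hp, hzp]
  · simp [swap_apply_of_ne_of_ne hzp hzn, hzp, hzn]

lemma mem_lowers_insert_erase_lower [DecidableEq α] {p n : α} (hp : S.lower p ∉ D)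
    (hn : S.lower n ∈ D) (z : α) :
    z ∈ S.lowers (insert (S.lower p) (D.erase (S.lower n))) ↔ swap p n z ∈ S.lowers D := by
  rcases eq_or_ne z p with rfl | hzp
  · simp [hn]
  rcases eq_or_ne z n with rfl | hzn
  · simp [hp, hzp]
  · simp [swap_apply_of_ne_of_ne hzp hzn, hzp, hzn]

end Moves

end Strip

open Strip OrderDual

def rowStrip (i : ℕ) : Strip ℕ where
  upper := ⟨fun x => (i + 1, x), fun _ _ h => (Prod.mk.inj h).2⟩
  lower := ⟨fun y => (i, y), fun _ _ h => (Prod.mk.inj h).2⟩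
  upper_ne_lower _ _ h := Nat.succ_ne_self i (congrArg Prod.fst h)

/-- Rows are read from the top down, so that `𝚎̄_c` becomes an operator of the same kind as
`e_r`. -/
def colStrip (c : ℕ) : Strip ℕᵒᵈ where
  upper := ⟨fun x => (ofDual x, c + 1), fun _ _ h => (Prod.mk.inj h).1⟩
  lower := ⟨fun y => (ofDual y, c), fun _ _ h => (Prod.mk.inj h).1⟩
  upper_ne_lower _ _ h := Nat.succ_ne_self c (congrArg Prod.snd h)

@[simp] lemma rowStrip_upper (i x : ℕ) : (rowStrip i).upper x = (i + 1, x) := rfl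

@[simp] lemma rowStrip_lower (i y : ℕ) : (rowStrip i).lower y = (i, y) := rfl

@[simp] lemma colStrip_upper (c : ℕ) (x : ℕᵒᵈ) : (colStrip c).upper x = (ofDual x, c + 1) := rfl

@[simp] lemma colStrip_lower (c : ℕ) (y : ℕᵒᵈ) : (colStrip c).lower y = (ofDual y, c) := rfl

lemma vStep_eq (i : ℕ) (D : Finset (ℕ × ℕ)) : VStep i D = (rowStrip i).Step D := by
  ext M M'
  simp only [VStep, Strip.Step, PairedBetween, rowStrip]
  refine exists₂_congr fun x y => and_congr_right' <| and_congr_right' <| and_congr_right' <|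
    and_congr_right' <| and_congr_right' <| and_congr_left' ⟨fun h z h₁ h₂ => ?_, ?_⟩
  · exact ⟨fun hz => h _ hz (Or.inr rfl) h₁ h₂, fun hz => h _ hz (Or.inl rfl) h₁ h₂⟩
  · rintro h ⟨a, z⟩ hz (rfl | rfl) h₁ h₂
    exacts [(h z h₁ h₂).2 hz, (h z h₁ h₂).1 hz]

lemma hStep_eq (c : ℕ) (D : Finset (ℕ × ℕ)) : HStep c D = (colStrip c).Step D := by
  ext M M'
  simp only [HStep, Strip.Step, PairedBetween, colStrip]
  refine exists₂_congr fun x y => and_congr_right' <| and_congr_right' <| and_congr_right' <|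
    and_congr_right' <| and_congr_right' <| and_congr_left' ⟨fun h z h₁ h₂ => ?_, ?_⟩
  · exact ⟨fun hz => h _ hz (Or.inr rfl) h₂ h₁, fun hz => h _ hz (Or.inl rfl) h₂ h₁⟩
  · rintro h ⟨z, a⟩ hz (rfl | rfl) h₁ h₂
    exacts [(h (toDual z) h₂ h₁).2 hz, (h (toDual z) h₂ h₁).1 hz]

lemma vInit_isInitial (i : ℕ) (D : Finset (ℕ × ℕ)) : (rowStrip i).IsInitial D (vInit i D) := by
  intro q
  simp only [vInit, rowStrip, mem_image, mem_filter]
  constructor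
  · rintro ⟨⟨a, x⟩, ⟨hx, rfl, hx'⟩, rfl⟩
    exact ⟨x, hx, hx', rfl⟩
  · rintro ⟨x, hx, hx', rfl⟩
    exact ⟨(i + 1, x), ⟨hx, rfl, hx'⟩, rfl⟩

lemma hInit_isInitial (c : ℕ) (D : Finset (ℕ × ℕ)) : (colStrip c).IsInitial D (hInit c D) := by
  intro q
  simp only [hInit, colStrip, mem_image, mem_filter]
  constructor
  · rintro ⟨⟨x, a⟩, ⟨hx, rfl, hx'⟩, rfl⟩
    exact ⟨toDual x, hx, hx', rfl⟩
  · rintro ⟨x, hx, hx', rfl⟩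
    exact ⟨(ofDual x, c + 1), ⟨hx, rfl, hx'⟩, rfl⟩

lemma raiseRel_iff_shiftRel {i : ℕ} {D E : Finset (ℕ × ℕ)} :
    RaiseRel i D E ↔ (rowStrip i).ShiftRel D (vInit i D) E := by
  simp only [RaiseRel, VOutcome, vStep_eq]
  rfl

lemma rectRel_iff_shiftRel {c : ℕ} {D E : Finset (ℕ × ℕ)} :
    RectRel c D E ↔ (colStrip c).ShiftRel D (hInit c D) E := by
  simp only [RectRel, HOutcome, hStep_eq]
  rfl

theorem raiseRel_iff {i : ℕ} {D E : Finset (ℕ × ℕ)} :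
    RaiseRel i D E ↔
      ∃ g, IsGreatest {x | (rowStrip i).IsUnpaired D x} g ∧ E = (rowStrip i).shift D g :=
  raiseRel_iff_shiftRel.trans (shiftRel_iff (vInit_isInitial i D))

theorem rectRel_iff {c : ℕ} {D E : Finset (ℕ × ℕ)} :
    RectRel c D E ↔
      ∃ g, IsGreatest {y | (colStrip c).IsUnpaired D y} g ∧ E = (colStrip c).shift D g :=
  rectRel_iff_shiftRel.trans (shiftRel_iff (hInit_isInitial c D))

theorem exists_raiseRel_iff {i : ℕ} {D : Finset (ℕ × ℕ)} :
    (∃ E, RaiseRel i D E) ↔ ∃ x, (rowStrip i).IsUnpaired D x := by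
  simp only [raiseRel_iff_shiftRel, exists_shiftRel_iff (vInit_isInitial i D)]

theorem exists_rectRel_iff {c : ℕ} {D : Finset (ℕ × ℕ)} :
    (∃ E, RectRel c D E) ↔ ∃ y, (colStrip c).IsUnpaired D y := by
  simp only [rectRel_iff_shiftRel, exists_shiftRel_iff (hInit_isInitial c D)]

section Commute

variable {r c : ℕ} {D : Finset (ℕ × ℕ)}

/-- `𝚎̄_c` acting in row `ρ` exchanges columns `c` and `c + 1` of the opening row of the
`r`-pairing if `ρ = r`, of its closing row if `ρ = r + 1`, and does not touch it otherwise. -/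
def rectSwap (r c ρ : ℕ) : Equiv.Perm ℕ := if ρ = r ∨ ρ = r + 1 then swap c (c + 1) else 1

/-- `e_r` acting in column `γ` exchanges rows `r + 1` and `r` of the opening column of the
`c`-pairing if `γ = c`, of its closing column if `γ = c + 1`, and does not touch it otherwise. -/
def raiseSwap (r c γ : ℕ) : Equiv.Perm ℕᵒᵈ :=
  if γ = c ∨ γ = c + 1 then swap (toDual (r + 1)) (toDual r) else 1

lemma isUnpaired_rowStrip_shift_colStrip {ρ : ℕᵒᵈ}
    (hρ : IsGreatest {y | (colStrip c).IsUnpaired D y} ρ) (x : ℕ) :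
    (rowStrip r).IsUnpaired ((colStrip c).shift D ρ) x ↔
      (rowStrip r).IsUnpaired D (rectSwap r c (ofDual ρ) x) := by
  obtain ⟨ρ, rfl⟩ := toDual.surjective ρ
  have hin : (ρ, c + 1) ∈ D := by simpa using hρ.1.1
  have hout : (ρ, c) ∉ D := fun h => hρ.1.notMem (by simpa using h)
  rw [ofDual_toDual]
  unfold rectSwap
  split_ifs with hρr
  · unfold IsUnpaired
    rcases hρr with rfl | rfl
    · have hshift : (colStrip c).shift D (toDual ρ) =
          insert ((rowStrip ρ).lower c) (D.erase ((rowStrip ρ).lower (c + 1))) := rfl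
      rw [hshift, uppers_insert_erase (fun z => (rowStrip ρ).upper_ne_lower z c)
        (fun z => (rowStrip ρ).upper_ne_lower z (c + 1))]
      refine unpaired_swap_opening_iff (Order.covBy_add_one c)
        (mem_lowers_insert_erase_lower hout hin) (by simp [hin, hout]) (fun h => ?_) x
      have := hρ.1.mem_of_covBy (Order.covBy_add_one ρ).toDual (by simpa using h)
      simpa using this
    · have hshift : (colStrip c).shift D (toDual (r + 1)) =
          insert ((rowStrip r).upper c) (D.erase ((rowStrip r).upper (c + 1))) := rfl
      rw [hshift, lowers_insert_erase (fun z => ((rowStrip r).upper_ne_lower c z).symm)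
        (fun z => ((rowStrip r).upper_ne_lower (c + 1) z).symm)]
      refine unpaired_swap_closing_iff (Order.covBy_add_one c)
        (mem_uppers_insert_erase_upper hout hin) (by simp [hin, hout]) (fun h => ?_) x
      by_contra hc
      have := hρ.2 (hρ.1.of_covBy (Order.covBy_add_one r).toDual (by simpa using h)
        (by simpa using hc))
      exact (Nat.lt_succ_self r).not_ge this
  · have hshift : (colStrip c).shift D (toDual ρ) = insert (ρ, c) (D.erase (ρ, c + 1)) := rfl
    rw [hshift, isUnpaired_insert_erase (by simp; omega) (by simp; omega)]
    rfl

lemma isUnpaired_colStrip_shift_rowStrip {γ : ℕ}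
    (hγ : IsGreatest {x | (rowStrip r).IsUnpaired D x} γ) (y : ℕᵒᵈ) :
    (colStrip c).IsUnpaired ((rowStrip r).shift D γ) y ↔
      (colStrip c).IsUnpaired D (raiseSwap r c γ y) := by
  have hin : (r + 1, γ) ∈ D := by simpa using hγ.1.1
  have hout : (r, γ) ∉ D := fun h => hγ.1.notMem (by simpa using h)
  have hcov : toDual (r + 1) ⋖ toDual r := (Order.covBy_add_one r).toDual
  unfold raiseSwap
  split_ifs with hγc
  · unfold IsUnpaired
    rcases hγc with rfl | rfl
    · have hshift : (rowStrip r).shift D γ =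
          insert ((colStrip γ).lower (toDual r)) (D.erase ((colStrip γ).lower (toDual (r + 1)))) :=
        rfl
      rw [hshift, uppers_insert_erase (fun z => (colStrip γ).upper_ne_lower z _)
        (fun z => (colStrip γ).upper_ne_lower z _)]
      refine unpaired_swap_opening_iff hcov
        (fun z => swap_comm (toDual r) _ ▸ mem_lowers_insert_erase_lower hout hin z)
        (by simp [hin, hout]) (fun h => ?_) y
      by_contra hc
      have := hγ.2 (hγ.1.of_covBy (Order.covBy_add_one γ) (by simpa using h) (by simpa using hc))
      exact (Nat.lt_succ_self γ).not_ge this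
    · have hshift : (rowStrip r).shift D (c + 1) =
          insert ((colStrip c).upper (toDual r)) (D.erase ((colStrip c).upper (toDual (r + 1)))) :=
        rfl
      rw [hshift, lowers_insert_erase (fun z => ((colStrip c).upper_ne_lower _ z).symm)
        (fun z => ((colStrip c).upper_ne_lower _ z).symm)]
      refine unpaired_swap_closing_iff hcov
        (fun z => swap_comm (toDual r) _ ▸ mem_uppers_insert_erase_upper hout hin z)
        (by simp [hin, hout]) (fun h => ?_) y
      have := hγ.1.mem_of_covBy (Order.covBy_add_one c) (by simpa using h)
      simpa using this
  · have hshift : (rowStrip r).shift D γ = insert (r, γ) (D.erase (r + 1, γ)) := rfl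
    rw [hshift, isUnpaired_insert_erase (by simp; omega) (by simp; omega)]
    rfl

lemma isGreatest_rowStrip_shift_colStrip {ρ : ℕᵒᵈ} {γ : ℕ}
    (hρ : IsGreatest {y | (colStrip c).IsUnpaired D y} ρ)
    (hγ : IsGreatest {x | (rowStrip r).IsUnpaired D x} γ) :
    IsGreatest {x | (rowStrip r).IsUnpaired ((colStrip c).shift D ρ) x}
      (rectSwap r c (ofDual ρ) γ) := by
  rw [show {x | (rowStrip r).IsUnpaired ((colStrip c).shift D ρ) x} =
    rectSwap r c (ofDual ρ) ⁻¹' {x | (rowStrip r).IsUnpaired D x} from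
      Set.ext (isUnpaired_rowStrip_shift_colStrip hρ)]
  obtain ⟨ρ, rfl⟩ := toDual.surjective ρ
  rw [ofDual_toDual]
  unfold rectSwap
  split_ifs with hρr
  · refine isGreatest_preimage_swap (Order.covBy_add_one c) (fun ⟨hc, hc₁⟩ => ?_) hγ
    rcases hρr with rfl | rfl
    · exact hc₁.notMem (by simpa using hρ.1.1)
    · exact hρ.1.notMem (by simpa using hc.1)
  · simpa using hγ

lemma isGreatest_colStrip_shift_rowStrip {ρ : ℕᵒᵈ} {γ : ℕ}
    (hγ : IsGreatest {x | (rowStrip r).IsUnpaired D x} γ)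
    (hρ : IsGreatest {y | (colStrip c).IsUnpaired D y} ρ) :
    IsGreatest {y | (colStrip c).IsUnpaired ((rowStrip r).shift D γ) y}
      (raiseSwap r c γ ρ) := by
  rw [show {y | (colStrip c).IsUnpaired ((rowStrip r).shift D γ) y} =
    raiseSwap r c γ ⁻¹' {y | (colStrip c).IsUnpaired D y} from
      Set.ext (isUnpaired_colStrip_shift_rowStrip hγ)]
  unfold raiseSwap
  split_ifs with hγc
  · refine isGreatest_preimage_swap (Order.covBy_add_one r).toDual (fun ⟨hr₁, hr⟩ => ?_) hρ
    rcases hγc with rfl | rfl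
    · exact hr₁.notMem (by simpa using hγ.1.1)
    · exact hγ.1.notMem (by simpa using hr.1)
  · simpa using hρ

/-- When `𝚎̄_c` and `e_r` interact, both composites move `(r + 1, c + 1)` to `(r, c)`; otherwise
the two moves involve four distinct cells. -/
lemma shift_rowStrip_shift_colStrip {ρ : ℕᵒᵈ} {γ : ℕ}
    (hρ : IsGreatest {y | (colStrip c).IsUnpaired D y} ρ)
    (hγ : IsGreatest {x | (rowStrip r).IsUnpaired D x} γ) :
    (rowStrip r).shift ((colStrip c).shift D ρ) (rectSwap r c (ofDual ρ) γ) =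
      (colStrip c).shift ((rowStrip r).shift D γ) (raiseSwap r c γ ρ) := by
  obtain ⟨ρ, rfl⟩ := toDual.surjective ρ
  have h₁ : (ρ, c + 1) ∈ D := by simpa using hρ.1.1
  have h₂ : (ρ, c) ∉ D := fun h => hρ.1.notMem (by simpa using h)
  have h₃ : (r + 1, γ) ∈ D := by simpa using hγ.1.1
  have h₄ : (r, γ) ∉ D := fun h => hγ.1.notMem (by simpa using h)
  rw [ofDual_toDual]
  unfold rectSwap raiseSwap
  ext ⟨a, b⟩
  split_ifs <;>
    simp only [shift, rowStrip_upper, rowStrip_lower, colStrip_upper, colStrip_lower, mem_insert,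
      mem_erase, ne_eq, Prod.mk.injEq, Equiv.Perm.coe_one, id, ofDual_toDual, swap_apply_def,
      toDual_inj, apply_ite ofDual] <;>
    grind

end Commute

theorem rect_raise_commute_general (c r : ℕ)
    (D : Finset (ℕ × ℕ)) :
    (∀ D₁, RectRel c D D₁ → ((∃ E, RaiseRel r D E) ↔ ∃ E, RaiseRel r D₁ E)) ∧
    (∀ D₂, RaiseRel r D D₂ → ((∃ E, RectRel c D E) ↔ ∃ E, RectRel c D₂ E)) ∧
    (∀ D₁ D₂ E₁ E₂, RectRel c D D₁ → RaiseRel r D D₂ →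
      RaiseRel r D₁ E₁ → RectRel c D₂ E₂ → E₁ = E₂) := by
  refine ⟨fun D₁ hD₁ => ?_, fun D₂ hD₂ => ?_, fun D₁ D₂ E₁ E₂ hD₁ hD₂ hE₁ hE₂ => ?_⟩
  · obtain ⟨ρ, hρ, rfl⟩ := rectRel_iff.1 hD₁
    simp only [exists_raiseRel_iff, isUnpaired_rowStrip_shift_colStrip hρ]
    exact (rectSwap r c (ofDual ρ)).surjective.exists
  · obtain ⟨γ, hγ, rfl⟩ := raiseRel_iff.1 hD₂
    simp only [exists_rectRel_iff, isUnpaired_colStrip_shift_rowStrip hγ]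
    exact (raiseSwap r c γ).surjective.exists
  · obtain ⟨ρ, hρ, rfl⟩ := rectRel_iff.1 hD₁
    obtain ⟨γ, hγ, rfl⟩ := raiseRel_iff.1 hD₂
    obtain ⟨γ₁, hγ₁, rfl⟩ := raiseRel_iff.1 hE₁
    obtain ⟨ρ₂, hρ₂, rfl⟩ := rectRel_iff.1 hE₂
    rw [hγ₁.unique (isGreatest_rowStrip_shift_colStrip hρ hγ),
      hρ₂.unique (isGreatest_colStrip_shift_rowStrip hγ hρ)]
    exact shift_rowStrip_shift_colStrip hρ hγ

/-- Rectification operators commute with raising operators on diagrams: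
whenever `𝚎̄_c(D) ≠ 0`, `e_r(D) ≠ 0` iff `e_r(𝚎̄_c(D)) ≠ 0`; whenever
`e_r(D) ≠ 0`, `𝚎̄_c(D) ≠ 0` iff `𝚎̄_c(e_r(D)) ≠ 0`; and when both are nonzero,
`𝚎̄_c(e_r(D)) = e_r(𝚎̄_c(D))`. -/
theorem rect_raise_commute (c r : ℕ) (hc : 1 ≤ c) (hr : 1 ≤ r)
    (D : Finset (ℕ × ℕ)) :
    (∀ D₁, RectRel c D D₁ → ((∃ E, RaiseRel r D E) ↔ ∃ E, RaiseRel r D₁ E)) ∧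
    (∀ D₂, RaiseRel r D D₂ → ((∃ E, RectRel c D E) ↔ ∃ E, RectRel c D₂ E)) ∧
    (∀ D₁ D₂ E₁ E₂, RectRel c D D₁ → RaiseRel r D D₂ →
      RaiseRel r D₁ E₁ → RectRel c D₂ E₂ → E₁ = E₂) :=
  rect_raise_commute_general c r D
end

section
/- For a weak composition a with α = flat(a) and T_a the unique lock Kohnert tableau of content a with weight α, applying the rectification algorithm R_α to the underlying diagram of T_a yields the left-justified key diagram of α; in particular R_α(𝔻(T_a)) ≠ 0. -/
open scoped Classical

/-- The key (left-justified) diagram of a weak composition `a`. -/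
def keyDiagram (a : List ℕ) : Finset (ℕ × ℕ) :=
  (Finset.Icc 1 a.length ×ˢ Finset.Icc 1 (maxPart a)).filter
    (fun p => p.2 ≤ a.getD (p.1 - 1) 0)

/-- The set of key Kohnert diagrams of `a`: all diagrams obtainable from the key
diagram of `a` by sequences of Kohnert moves. -/
noncomputable def KDset (a : List ℕ) : Finset (Finset (ℕ × ℕ)) :=
  ((Finset.Icc 1 a.length ×ˢ Finset.Icc 1 (maxPart a)).powerset).filter
    (fun D => Relation.ReflTransGen KohnertMove (keyDiagram a) D)

/-- The key polynomial `κ_a = Σ_{D ∈ KD(a)} x^{wt(D)}`. -/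
noncomputable def keyPoly (a : List ℕ) : MvPolynomial ℕ ℤ :=
  ∑ D ∈ KDset a, MvPolynomial.monomial (wtF D) (1 : ℤ)

/-- A labeled diagram is a finite set of triples `(row, column, label)`. The
underlying diagram forgets the labels. -/
def Tcells (T : Finset (ℕ × ℕ × ℕ)) : Finset (ℕ × ℕ) := T.image (fun t => (t.1, t.2.1))

/-- The weight of a labeled diagram records the number of cells in each row. -/
noncomputable def wtT (T : Finset (ℕ × ℕ × ℕ)) : ℕ →₀ ℕ := ∑ t ∈ T, Finsupp.single t.1 1

/-- Lock Kohnert tableau of content `a`: one label per cell; exactly one `i` in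
each column from `max(a) - a_i + 1` through `max(a)`; entries in row `r` are at
least `r` (and labels lie in `1..n`); cells with a fixed label weakly descend
from left to right; labels strictly decrease down columns. -/
def IsLKTF (a : List ℕ) (T : Finset (ℕ × ℕ × ℕ)) : Prop :=
  (∀ t ∈ T, ∀ t' ∈ T, t.1 = t'.1 → t.2.1 = t'.2.1 → t = t') ∧
  (∀ i ∈ Finset.Icc 1 a.length, ∀ c : ℕ,
      (T.filter (fun t => t.2.1 = c ∧ t.2.2 = i)).card =
        if maxPart a - a.getD (i - 1) 0 < c ∧ c ≤ maxPart a then 1 else 0) ∧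
  (∀ t ∈ T, 1 ≤ t.1 ∧ t.1 ≤ t.2.2 ∧ 1 ≤ t.2.2 ∧ t.2.2 ≤ a.length) ∧
  (∀ t ∈ T, ∀ t' ∈ T, t.2.2 = t'.2.2 → t.2.1 < t'.2.1 → t'.1 ≤ t.1) ∧
  (∀ t ∈ T, ∀ t' ∈ T, t.2.1 = t'.2.1 → t.1 < t'.1 → t.2.2 < t'.2.2)

/-- `flat(a)`: the nonzero parts of `a`, in order. -/
def flatC (a : List ℕ) : List ℕ := a.filter (fun x => x ≠ 0)

/-- Composing a list of indexed partial operators (given as relations), applying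
the head of the list first. -/
def ChainRel (R : ℕ → Finset (ℕ × ℕ) → Finset (ℕ × ℕ) → Prop) :
    List ℕ → Finset (ℕ × ℕ) → Finset (ℕ × ℕ) → Prop
  | [], D, D' => D' = D
  | c :: cs, D, D' => ∃ E, R c D E ∧ ChainRel R cs E D'

/-- The steps (in order of application) of
`R_{α,i} = (𝚎̄_{α_i}∘⋯∘𝚎̄_{m-1})∘⋯∘(𝚎̄_1∘⋯∘𝚎̄_{m-α_i})`, where `ai = α_i`:
for `k = 1, …, α_i` the block `𝚎̄_{m-α_i+k-1}, …, 𝚎̄_k`. -/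
def rectStepsRow (m ai : ℕ) : List ℕ :=
  (List.range ai).foldr (fun k acc => (List.range' (k + 1) (m - ai)).reverse ++ acc) []

/-- The steps (in order of application) of `R_α = R_{α,ℓ(α)}∘⋯∘R_{α,1}`. -/
def rectSteps (α : List ℕ) : List ℕ :=
  (List.range α.length).foldr (fun j acc => rectStepsRow (maxPart α) (α.getD j 0) ++ acc) []

/-- The Rectification algorithm `R_α` as a relation on diagrams. -/
def RalgRel (α : List ℕ) : Finset (ℕ × ℕ) → Finset (ℕ × ℕ) → Prop :=
  ChainRel RectRel (rectSteps α)

namespace Aux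

lemma maxPart_flat (a : List ℕ) : maxPart (flatC a) = maxPart a := by
  induction a with
  | nil => rfl
  | cons x xs ih =>
    by_cases hx : x = 0
    · simp [flatC, maxPart, hx] at *; simpa [flatC, maxPart] using ih
    · simp only [flatC, maxPart, List.filter_cons, hx, decide_not, List.foldr] at *
      simp [hx, ih]

lemma getD_le_maxPart (a : List ℕ) (k : ℕ) : a.getD k 0 ≤ maxPart a := by
  induction a generalizing k with
  | nil => simp [maxPart]
  | cons x xs ih =>
    cases k with
    | zero => simp [maxPart]
    | succ k => simpa [maxPart] using le_trans (ih k) (le_max_right _ _)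

lemma flat_pos (a : List ℕ) (j : ℕ) (hj : j < (flatC a).length) :
    0 < (flatC a).getD j 0 := by
  have hmem : (flatC a).getD j 0 ∈ flatC a := by
    rw [List.getD_eq_getElem _ _ hj]
    exact List.getElem_mem _
  have := List.of_mem_filter hmem
  simpa using Nat.pos_of_ne_zero (by simpa using this)

/-- number of nonzero entries among the first `k` -/
def cntz (a : List ℕ) (k : ℕ) : ℕ := (a.take k).countP (fun x => x ≠ 0)

lemma cntz_zero (a : List ℕ) : cntz a 0 = 0 := by simp [cntz]

lemma cntz_cons_succ (x : ℕ) (xs : List ℕ) (k : ℕ) :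
    cntz (x :: xs) (k + 1) = (if x ≠ 0 then 1 else 0) + cntz xs k := by
  by_cases hx : x = 0 <;> simp [cntz, List.take_cons, List.countP_cons, hx] <;> omega

lemma flatC_cons_zero (xs : List ℕ) : flatC (0 :: xs) = flatC xs := by
  simp [flatC, List.filter_cons]

lemma flatC_cons_ne (x : ℕ) (xs : List ℕ) (hx : x ≠ 0) :
    flatC (x :: xs) = x :: flatC xs := by
  simp [flatC, List.filter_cons, hx]

lemma cntz_len (a : List ℕ) : cntz a a.length = (flatC a).length := by
  simp [cntz, flatC, List.countP_eq_length_filter]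

lemma cntz_succ (a : List ℕ) (k : ℕ) (hk : k < a.length) :
    cntz a (k + 1) = cntz a k + (if a.getD k 0 ≠ 0 then 1 else 0) := by
  unfold cntz
  rw [List.take_succ, List.countP_append]
  have h : a[k]? = some (a.getD k 0) := by
    rw [List.getElem?_eq_getElem hk, List.getD_eq_getElem _ _ hk]
  rw [h]
  by_cases hz : a.getD k 0 = 0 <;>
    simp [hz, ← List.getD_eq_getElem?_getD]

lemma cntz_mono (a : List ℕ) {k k' : ℕ} (h : k ≤ k') : cntz a k ≤ cntz a k' := by
  have hpre : List.Sublist (a.take k) (a.take k') := by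
    have h2 : (a.take k').take k = a.take k := by rw [List.take_take, Nat.min_eq_left h]
    rw [← h2]
    exact List.take_sublist _ _
  exact List.Sublist.countP_le hpre

lemma cntz_lt_len (a : List ℕ) (k : ℕ) (hk : k < a.length) (hnz : a.getD k 0 ≠ 0) :
    cntz a k < (flatC a).length := by
  have h1 : cntz a (k+1) = cntz a k + 1 := by
    rw [cntz_succ a k hk]; simp [hnz, ← List.getD_eq_getElem?_getD]
  have h2 : cntz a (k+1) ≤ cntz a a.length := cntz_mono a hk
  rw [cntz_len] at h2; omega

/-- value of flat at the rank position -/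
lemma flat_getD_cntz (a : List ℕ) (k : ℕ) (hk : k < a.length) (hnz : a.getD k 0 ≠ 0) :
    (flatC a).getD (cntz a k) 0 = a.getD k 0 := by
  induction a generalizing k with
  | nil => simp at hk
  | cons x xs ih =>
    cases k with
    | zero =>
      rw [List.getD_cons_zero] at hnz ⊢
      rw [flatC_cons_ne x xs hnz, cntz_zero, List.getD_cons_zero]
    | succ k =>
      rw [List.getD_cons_succ] at hnz ⊢
      have hk' : k < xs.length := by simpa using hk
      rw [cntz_cons_succ]
      by_cases hx : x = 0
      · subst hx
        rw [flatC_cons_zero]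
        simpa using ih k hk' hnz
      · rw [flatC_cons_ne x xs hx, if_pos hx, Nat.add_comm, List.getD_cons_succ]
        exact ih k hk' hnz

/-- strict monotonicity of rank on nonzero entries -/
lemma cntz_strict (a : List ℕ) {k k' : ℕ} (h : k < k') (hk : k < a.length)
    (hnz : a.getD k 0 ≠ 0) : cntz a k < cntz a k' := by
  have h1 : cntz a (k+1) = cntz a k + 1 := by
    rw [cntz_succ a k hk]; simp [hnz, ← List.getD_eq_getElem?_getD]
  have h2 : cntz a (k+1) ≤ cntz a k' := cntz_mono a h
  omega

/-- surjectivity of rank -/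
lemma cntz_surj (a : List ℕ) (j : ℕ) (hj : j < (flatC a).length) :
    ∃ k < a.length, a.getD k 0 ≠ 0 ∧ cntz a k = j := by
  induction a generalizing j with
  | nil => simp [flatC] at hj
  | cons x xs ih =>
    by_cases hx : x = 0
    · subst hx
      have hj' : j < (flatC xs).length := by rwa [flatC_cons_zero] at hj
      obtain ⟨k, hk, hnz, hc⟩ := ih j hj'
      exact ⟨k+1, by simpa using hk, by simpa using hnz,
        by rw [cntz_cons_succ]; simpa using hc⟩
    · rw [flatC_cons_ne x xs hx] at hj
      cases j with
      | zero => exact ⟨0, by simp, by simpa using hx, cntz_zero _⟩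
      | succ j =>
        have hj' : j < (flatC xs).length := by simpa using hj
        obtain ⟨k, hk, hnz, hc⟩ := ih j hj'
        refine ⟨k+1, by simpa using hk, by simpa using hnz, ?_⟩
        rw [cntz_cons_succ, if_pos (by simp [hx]), hc]
        omega

end Aux

namespace Aux

def att (α : List ℕ) (r : ℕ) : ℕ := α.getD (r - 1) 0

lemma att_le_maxPart (α : List ℕ) (r : ℕ) : att α r ≤ maxPart α :=
  getD_le_maxPart α (r - 1)

/-- The intermediate diagrams during rectification. -/
def Dprog (α : List ℕ) (j0 K p : ℕ) : Finset (ℕ × ℕ) :=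
  (Finset.Icc 1 α.length ×ˢ Finset.Icc 1 (maxPart α)).filter
    (fun q => if q.1 < j0 then q.2 ≤ att α q.1
      else if q.1 = j0 then (q.2 < K ∨ q.2 = p ∨ maxPart α - att α j0 + K < q.2)
      else maxPart α - att α q.1 < q.2)

lemma mem_Dprog {α : List ℕ} {j0 K p r c : ℕ} : (r, c) ∈ Dprog α j0 K p ↔
    1 ≤ r ∧ r ≤ α.length ∧ 1 ≤ c ∧ c ≤ maxPart α ∧
      (if r < j0 then c ≤ att α r
        else if r = j0 then (c < K ∨ c = p ∨ maxPart α - att α j0 + K < c)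
        else maxPart α - att α r < c) := by
  simp only [Dprog, Finset.mem_filter, Finset.mem_product, Finset.mem_Icc]
  tauto

lemma pair_eta {p : ℕ × ℕ} {x : ℕ} (h : p.2 = x) : p = (p.1, x) := by rw [← h]

lemma mem_matched_hInit {c : ℕ} {D : Finset (ℕ × ℕ)} {q : ℕ × ℕ} :
    q ∈ matchedBoxes (hInit c D) ↔
      (q.2 = c + 1 ∧ q ∈ D ∧ (q.1, c) ∈ D) ∨ (q.2 = c ∧ q ∈ D ∧ (q.1, c + 1) ∈ D) := by
  unfold matchedBoxes hInit
  rw [Finset.mem_union, Finset.image_image, Finset.image_image]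
  simp only [Function.comp, Finset.mem_image, Finset.mem_filter]
  constructor
  · rintro (⟨p, ⟨hp, h2, h3⟩, rfl⟩ | ⟨p, ⟨hp, h2, h3⟩, rfl⟩)
    · exact Or.inl ⟨h2, hp, h3⟩
    · exact Or.inr ⟨rfl, h3, by rw [← pair_eta h2]; exact hp⟩
  · rintro (⟨h1, h2, h3⟩ | ⟨h1, h2, h3⟩)
    · exact Or.inl ⟨q, ⟨h2, h1, h3⟩, rfl⟩
    · exact Or.inr ⟨(q.1, c + 1), ⟨h3, rfl, by rw [← pair_eta h1]; exact h2⟩,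
        (pair_eta h1).symm⟩

end Aux

namespace Aux

lemma stepRect (α : List ℕ) (j0 K p : ℕ) (hj1 : 1 ≤ j0) (hj2 : j0 ≤ α.length)
    (hK : 1 ≤ K) (hKa : K ≤ att α j0) (hp1 : K + 1 ≤ p)
    (hp2 : p ≤ maxPart α - att α j0 + K) :
    RectRel (p - 1) (Dprog α j0 K p) (Dprog α j0 K (p - 1)) := by
  set m := maxPart α with hm
  set ai := att α j0 with hai
  have ham : ai ≤ m := att_le_maxPart α j0
  set D := Dprog α j0 K p with hD
  set c := p - 1 with hc
  have hc1 : c + 1 = p := by omega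
  have hpm : p ≤ m := by omega
  -- the traveling box is in D
  have hmemp : (j0, p) ∈ D := by
    rw [hD, mem_Dprog]
    refine ⟨hj1, hj2, by omega, hpm, ?_⟩
    rw [if_neg (by omega), if_pos rfl]
    exact Or.inr (Or.inl rfl)
  -- (j0, c) ∉ D
  have hnotc : (j0, c) ∉ D := by
    rw [hD, mem_Dprog]
    rintro ⟨-, -, -, -, h⟩
    rw [if_neg (by omega), if_pos rfl] at h
    rcases h with h | h | h <;> omega
  -- any cell in a row below j0 in column c+1 has a neighbor in column c
  have hlow : ∀ r', r' < j0 → (r', c + 1) ∈ D → (r', c) ∈ D := by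
    intro r' hr' hmem
    rw [hD, mem_Dprog] at hmem ⊢
    obtain ⟨h1, h2, h3, h4, h5⟩ := hmem
    rw [if_pos hr'] at h5
    refine ⟨h1, h2, by omega, by omega, ?_⟩
    rw [if_pos hr']
    omega
  -- any cell in a row above j0 in column c has a neighbor in column c+1
  have hhigh : ∀ r', j0 < r' → (r', c) ∈ D → (r', c + 1) ∈ D := by
    intro r' hr' hmem
    rw [hD, mem_Dprog] at hmem ⊢
    obtain ⟨h1, h2, h3, h4, h5⟩ := hmem
    rw [if_neg (by omega), if_neg (by omega)] at h5
    refine ⟨h1, h2, by omega, by omega, ?_⟩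
    rw [if_neg (by omega), if_neg (by omega)]
    omega
  refine ⟨hInit c D, j0, ⟨Relation.ReflTransGen.refl, ?_⟩, by rw [hc1]; exact hmemp, ?_, ?_, ?_⟩
  · -- no HStep applies
    rintro M' ⟨rx, ry, hrx, hry, hlt, hrxU, hryU, -, -⟩
    -- (ry, c) unpaired means (ry, c+1) ∉ D
    have hry1 : (ry, c + 1) ∉ D := by
      intro hmem
      exact hryU (mem_matched_hInit.mpr (Or.inr ⟨rfl, hry, hmem⟩))
    -- rx ≥ j0
    have hrxj : j0 ≤ rx := by
      by_contra hcon
      exact hrxU (mem_matched_hInit.mpr (Or.inl ⟨rfl, hrx, hlow rx (by omega) hrx⟩))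
    -- so ry > j0
    have hryj : j0 < ry := by omega
    exact hry1 (hhigh ry hryj hry)
  · -- the traveling box is unpaired
    intro hmem
    rcases mem_matched_hInit.mp hmem with ⟨-, -, h⟩ | ⟨h, -, -⟩
    · exact hnotc h
    · omega
  · -- minimality
    intro r' hmem hunp
    by_contra hcon
    exact hunp (mem_matched_hInit.mpr (Or.inl ⟨rfl, hmem, hlow r' (by omega) hmem⟩))
  · -- the resulting diagram
    symm
    ext ⟨r, cc⟩
    rw [Finset.mem_insert, Finset.mem_erase, hc1]
    constructor
    · rintro (h | ⟨hne, hmem⟩)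
      · rw [Prod.mk.injEq] at h
        obtain ⟨rfl, rfl⟩ := h
        rw [mem_Dprog]
        refine ⟨hj1, hj2, by omega, by omega, ?_⟩
        rw [if_neg (by omega), if_pos rfl]
        exact Or.inr (Or.inl rfl)
      · rw [hD, mem_Dprog] at hmem
        rw [mem_Dprog]
        obtain ⟨h1, h2, h3, h4, h5⟩ := hmem
        refine ⟨h1, h2, h3, h4, ?_⟩
        simp only [ne_eq, Prod.mk.injEq, not_and_or] at hne
        by_cases hr : r < j0
        · rwa [if_pos hr] at h5 ⊢
        · by_cases hr2 : r = j0
          · rw [if_neg hr, if_pos hr2] at h5 ⊢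
            subst hr2
            rcases hne with h | h
            · omega
            · omega
          · rwa [if_neg hr, if_neg hr2] at h5 ⊢
    · intro hmem
      rw [mem_Dprog] at hmem
      obtain ⟨h1, h2, h3, h4, h5⟩ := hmem
      by_cases hr : r < j0
      · rw [if_pos hr] at h5
        refine Or.inr ⟨by intro heq; rw [Prod.mk.injEq] at heq; omega, ?_⟩
        rw [hD, mem_Dprog]
        exact ⟨h1, h2, h3, h4, by rw [if_pos hr]; exact h5⟩
      · by_cases hr2 : r = j0
        · subst hr2
          rw [if_neg hr, if_pos rfl] at h5
          rcases h5 with h5 | h5 | h5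
          · refine Or.inr ⟨by intro heq; rw [Prod.mk.injEq] at heq; omega, ?_⟩
            rw [hD, mem_Dprog]
            refine ⟨h1, h2, h3, h4, ?_⟩
            rw [if_neg hr, if_pos rfl]
            omega
          · exact Or.inl (by rw [Prod.mk.injEq]; exact ⟨rfl, by omega⟩)
          · refine Or.inr ⟨by intro heq; rw [Prod.mk.injEq] at heq; omega, ?_⟩
            rw [hD, mem_Dprog]
            refine ⟨h1, h2, h3, h4, ?_⟩
            rw [if_neg hr, if_pos rfl]
            omega
        · rw [if_neg hr, if_neg hr2] at h5
          refine Or.inr ⟨by intro heq; rw [Prod.mk.injEq] at heq; omega, ?_⟩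
          rw [hD, mem_Dprog]
          exact ⟨h1, h2, h3, h4, by rw [if_neg hr, if_neg hr2]; exact h5⟩

end Aux

namespace Aux

lemma chainRel_append {R : ℕ → Finset (ℕ × ℕ) → Finset (ℕ × ℕ) → Prop}
    {l1 l2 : List ℕ} {D E D'' : Finset (ℕ × ℕ)}
    (h1 : ChainRel R l1 D E) (h2 : ChainRel R l2 E D'') :
    ChainRel R (l1 ++ l2) D D'' := by
  induction l1 generalizing D with
  | nil => rw [ChainRel] at h1; subst h1; simpa using h2
  | cons c cs ih =>
    obtain ⟨F, hF, hchain⟩ := h1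
    exact ⟨F, hF, ih hchain⟩

lemma blockChain (α : List ℕ) (j0 K : ℕ) (hj1 : 1 ≤ j0) (hj2 : j0 ≤ α.length)
    (hK : 1 ≤ K) (hKa : K ≤ att α j0) :
    ∀ d, d ≤ maxPart α - att α j0 →
      ChainRel RectRel (List.range' K d).reverse (Dprog α j0 K (K + d)) (Dprog α j0 K K) := by
  intro d
  induction d with
  | zero => intro _; simp [ChainRel]
  | succ d ih =>
    intro hd
    rw [List.range'_1_concat, List.reverse_append]
    simp only [List.reverse_singleton, List.singleton_append]
    refine ⟨Dprog α j0 K (K + d), ?_, ih (by omega)⟩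
    have := stepRect α j0 K (K + d + 1) hj1 hj2 hK hKa (by omega) (by omega)
    rw [show K + (d + 1) = K + d + 1 by omega]
    simpa using this

lemma Dprog_endBlock (α : List ℕ) (j0 K : ℕ) :
    Dprog α j0 K K = Dprog α j0 (K + 1) (maxPart α - att α j0 + K + 1) := by
  have ham : att α j0 ≤ maxPart α := att_le_maxPart α j0
  ext ⟨r, c⟩
  rw [mem_Dprog, mem_Dprog]
  refine and_congr_right fun h1 => and_congr_right fun h2 => and_congr_right fun h3 =>
    and_congr_right fun h4 => ?_
  by_cases hr : r < j0
  · rw [if_pos hr, if_pos hr]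
  · by_cases hr2 : r = j0
    · subst hr2
      rw [if_neg hr, if_neg hr, if_pos rfl, if_pos rfl]
      omega
    · rw [if_neg hr, if_neg hr, if_neg hr2, if_neg hr2]

lemma Dprog_rowEnd (α : List ℕ) (j0 : ℕ) :
    Dprog α j0 (att α j0) (att α j0) =
      Dprog α (j0 + 1) 1 (maxPart α - att α (j0 + 1) + 1) := by
  have ham : att α j0 ≤ maxPart α := att_le_maxPart α j0
  have ham2 : att α (j0 + 1) ≤ maxPart α := att_le_maxPart α (j0 + 1)
  ext ⟨r, c⟩
  rw [mem_Dprog, mem_Dprog]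
  refine and_congr_right fun h1 => and_congr_right fun h2 => and_congr_right fun h3 =>
    and_congr_right fun h4 => ?_
  by_cases hr2 : r = j0
  · subst hr2
    split_ifs <;> omega
  · by_cases hr3 : r = j0 + 1
    · subst hr3
      split_ifs <;> omega
    · split_ifs <;> omega

lemma rowChain (α : List ℕ) (j0 : ℕ) (hj1 : 1 ≤ j0) (hj2 : j0 ≤ α.length) :
    ∀ n lo, lo + n = att α j0 →
      ChainRel RectRel
        ((List.range' lo n).foldr
          (fun k acc => (List.range' (k + 1) (maxPart α - att α j0)).reverse ++ acc) [])
        (Dprog α j0 (lo + 1) (maxPart α - att α j0 + lo + 1))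
        (Dprog α j0 (att α j0) (att α j0)) := by
  intro n
  induction n with
  | zero =>
    intro lo hlo
    obtain rfl : lo = att α j0 := by omega
    show Dprog α j0 (att α j0) (att α j0) = _
    rw [Dprog_endBlock α j0 (att α j0)]
  | succ n ih =>
    intro lo hlo
    rw [List.range'_succ, List.foldr_cons]
    have hb := blockChain α j0 (lo + 1) hj1 hj2 (by omega) (by omega)
      (maxPart α - att α j0) le_rfl
    have e : lo + 1 + (maxPart α - att α j0) = maxPart α - att α j0 + lo + 1 := by omega
    rw [e] at hb
    have hi := ih (lo + 1) (by omega)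
    rw [← Dprog_endBlock α j0 (lo + 1)] at hi
    exact chainRel_append hb hi

lemma Dprog_key (α : List ℕ) (K p : ℕ) :
    keyDiagram α = Dprog α (α.length + 1) K p := by
  ext ⟨r, c⟩
  rw [keyDiagram, Finset.mem_filter, Finset.mem_product, Finset.mem_Icc, Finset.mem_Icc,
    mem_Dprog]
  constructor
  · rintro ⟨⟨⟨hr1, hr2⟩, hc1, hc2⟩, h⟩
    exact ⟨hr1, hr2, hc1, hc2, by rw [if_pos (by omega)]; exact h⟩
  · rintro ⟨hr1, hr2, hc1, hc2, h⟩
    rw [if_pos (by omega)] at h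
    exact ⟨⟨⟨hr1, hr2⟩, hc1, hc2⟩, h⟩

lemma att_succ (α : List ℕ) (j : ℕ) : att α (j + 1) = α.getD j 0 := rfl

lemma rowsChain (α : List ℕ) : ∀ n j, j + n = α.length →
    ChainRel RectRel
      ((List.range' j n).foldr
        (fun i acc => rectStepsRow (maxPart α) (α.getD i 0) ++ acc) [])
      (Dprog α (j + 1) 1 (maxPart α - att α (j + 1) + 1)) (keyDiagram α) := by
  intro n
  induction n with
  | zero =>
    intro j hj
    obtain rfl : j = α.length := by omega
    show keyDiagram α = _
    exact Dprog_key α 1 (maxPart α - att α (α.length + 1) + 1)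
  | succ n ih =>
    intro j hj
    rw [List.range'_succ, List.foldr_cons]
    have hrow := rowChain α (j + 1) (by omega) (by omega) (α.getD j 0) 0 (by rw [att_succ]; omega)
    rw [att_succ] at hrow
    have hb : ChainRel RectRel (rectStepsRow (maxPart α) (α.getD j 0))
        (Dprog α (j + 1) 1 (maxPart α - α.getD j 0 + 1))
        (Dprog α (j + 1) (α.getD j 0) (α.getD j 0)) := by
      rw [rectStepsRow, List.range_eq_range']
      have e1 : (0 : ℕ) + 1 = 1 := rfl
      have e2 : maxPart α - α.getD j 0 + 0 + 1 = maxPart α - α.getD j 0 + 1 := rfl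
      rw [e1, e2] at hrow
      exact hrow
    have hi := ih (j + 1) (by omega)
    rw [← att_succ α j] at hb
    have hend := Dprog_rowEnd α (j + 1)
    rw [att_succ α j] at hend
    rw [← hend] at hi
    rw [← att_succ α j] at hi
    exact chainRel_append hb hi

/-- The right-justified diagram of `α`. -/
def RJ (α : List ℕ) : Finset (ℕ × ℕ) :=
  (Finset.Icc 1 α.length ×ˢ Finset.Icc 1 (maxPart α)).filter
    (fun q => maxPart α - att α q.1 < q.2)

lemma RJ_eq_Dprog (α : List ℕ) :
    RJ α = Dprog α 1 1 (maxPart α - att α 1 + 1) := by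
  ext ⟨r, c⟩
  rw [RJ, Finset.mem_filter, Finset.mem_product, Finset.mem_Icc, Finset.mem_Icc, mem_Dprog]
  dsimp only
  have ham : att α r ≤ maxPart α := att_le_maxPart α r
  have ham1 : att α 1 ≤ maxPart α := att_le_maxPart α 1
  constructor
  · rintro ⟨⟨⟨hr1, hr2⟩, hc1, hc2⟩, h⟩
    refine ⟨hr1, hr2, hc1, hc2, ?_⟩
    by_cases hr : r = 1
    · subst hr
      rw [if_neg (by omega), if_pos rfl]
      omega
    · rw [if_neg (by omega), if_neg hr]
      exact h
  · rintro ⟨hr1, hr2, hc1, hc2, h⟩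
    refine ⟨⟨⟨hr1, hr2⟩, hc1, hc2⟩, ?_⟩
    by_cases hr : r = 1
    · subst hr
      rw [if_neg (by omega), if_pos rfl] at h
      omega
    · rwa [if_neg (by omega), if_neg hr] at h

lemma ralg_RJ (α : List ℕ) : RalgRel α (RJ α) (keyDiagram α) := by
  have h := rowsChain α α.length 0 (by omega)
  rw [RalgRel, rectSteps, List.range_eq_range']
  rw [RJ_eq_Dprog α]
  have e1 : (0 : ℕ) + 1 = 1 := rfl
  rw [e1] at h
  exact h

end Aux

namespace Aux

lemma cntz_eq_card (a : List ℕ) (k : ℕ) (hk : k ≤ a.length) :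
    cntz a k = ((Finset.range k).filter (fun k' => a.getD k' 0 ≠ 0)).card := by
  induction k with
  | zero => simp [cntz]
  | succ k ih =>
    have hk' : k < a.length := by omega
    rw [cntz_succ a k hk', ih (le_of_lt hk'), Finset.range_add_one, Finset.filter_insert]
    by_cases h : a.getD k 0 ≠ 0
    · rw [if_pos h, if_pos h, Finset.card_insert_of_notMem (by simp)]
    · rw [if_neg h, if_neg h]
      omega

lemma Tcells_eq (a : List ℕ) (T : Finset (ℕ × ℕ × ℕ)) (hT : IsLKTF a T)
    (hw : wtT T = compFinsupp (flatC a)) : Tcells T = RJ (flatC a) := by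
  obtain ⟨hu, hcnt, hbd, hdesc, hcol5⟩ := hT
  set m := maxPart a with hm
  -- every cell's column lies in the window of its (necessarily nonzero) label
  have hcolfact : ∀ t ∈ T, a.getD (t.2.2 - 1) 0 ≠ 0 ∧
      m - a.getD (t.2.2 - 1) 0 < t.2.1 ∧ t.2.1 ≤ m := by
    intro t ht
    have hbd' := hbd t ht
    have h := hcnt t.2.2 (Finset.mem_Icc.mpr ⟨hbd'.2.2.1, hbd'.2.2.2⟩) t.2.1
    have hpos : 0 < (T.filter (fun s => s.2.1 = t.2.1 ∧ s.2.2 = t.2.2)).card :=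
      Finset.card_pos.mpr ⟨t, Finset.mem_filter.mpr ⟨ht, rfl, rfl⟩⟩
    by_cases hcond : m - a.getD (t.2.2 - 1) 0 < t.2.1 ∧ t.2.1 ≤ m
    · refine ⟨?_, hcond.1, hcond.2⟩
      intro h0
      rw [h0] at hcond
      omega
    · rw [if_neg hcond] at h
      omega
  -- uniqueness of a cell with given column and label
  have huniq2 : ∀ t ∈ T, ∀ t' ∈ T, t.2.1 = t'.2.1 → t.2.2 = t'.2.2 → t = t' := by
    intro t ht t' ht' hc hl
    have hf := hcolfact t ht
    have hbd' := hbd t ht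
    have h := hcnt t.2.2 (Finset.mem_Icc.mpr ⟨hbd'.2.2.1, hbd'.2.2.2⟩) t.2.1
    rw [if_pos ⟨hf.2.1, hf.2.2⟩] at h
    have h1 : t ∈ T.filter (fun s => s.2.1 = t.2.1 ∧ s.2.2 = t.2.2) :=
      Finset.mem_filter.mpr ⟨ht, rfl, rfl⟩
    have h2 : t' ∈ T.filter (fun s => s.2.1 = t.2.1 ∧ s.2.2 = t.2.2) :=
      Finset.mem_filter.mpr ⟨ht', hc.symm, hl.symm⟩
    exact Finset.card_le_one.mp (le_of_eq h) t h1 t' h2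
  -- existence of a cell with given column and label
  have hexist : ∀ i c, 1 ≤ i → i ≤ a.length → m - a.getD (i - 1) 0 < c → c ≤ m →
      ∃ t, t ∈ T ∧ t.2.1 = c ∧ t.2.2 = i := by
    intro i c h1 h2' h3' h4'
    have h := hcnt i (Finset.mem_Icc.mpr ⟨h1, h2'⟩) c
    rw [if_pos ⟨h3', h4'⟩] at h
    have hne : (T.filter (fun s => s.2.1 = c ∧ s.2.2 = i)).Nonempty :=
      Finset.card_pos.mp (by rw [h]; omega)
    obtain ⟨t, htf⟩ := hne
    rw [Finset.mem_filter] at htf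
    exact ⟨t, htf.1, htf.2⟩
  -- column-m cell of each nonzero label
  have hgm : ∀ k, k < a.length → a.getD k 0 ≠ 0 →
      ∃ t, t ∈ T ∧ t.2.1 = m ∧ t.2.2 = k + 1 := by
    intro k hk hnz
    have hle := getD_le_maxPart a k
    refine hexist (k + 1) m (by omega) (by omega) ?_ le_rfl
    rw [show k + 1 - 1 = k from rfl]
    omega
  set ρ : ℕ → ℕ × ℕ × ℕ := fun k =>
      if h : k < a.length ∧ a.getD k 0 ≠ 0 then (hgm k h.1 h.2).choose else default
    with hρdef
  have hρ : ∀ k, k < a.length → a.getD k 0 ≠ 0 →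
      ρ k ∈ T ∧ (ρ k).2.1 = m ∧ (ρ k).2.2 = k + 1 := by
    intro k h1' h2'
    rw [hρdef]
    simp only []
    rw [dif_pos (And.intro h1' h2')]
    exact (hgm k h1' h2').choose_spec
  -- strict monotonicity of rows of column-m cells
  have hρmono : ∀ k k', k < a.length → k' < a.length → a.getD k 0 ≠ 0 →
      a.getD k' 0 ≠ 0 → k < k' → (ρ k).1 < (ρ k').1 := by
    intro k k' h1' h2' h3' h4' hlt
    obtain ⟨ht, hc, hl⟩ := hρ k h1' h3'
    obtain ⟨ht', hc', hl'⟩ := hρ k' h2' h4'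
    have hne : (ρ k).1 ≠ (ρ k').1 := by
      intro he
      have heq := hu (ρ k) ht (ρ k') ht' he (by rw [hc, hc'])
      rw [heq, hl'] at hl
      omega
    rcases lt_or_gt_of_ne hne with h | h
    · exact h
    · exfalso
      have := hcol5 (ρ k') ht' (ρ k) ht (by rw [hc, hc']) h
      rw [hl, hl'] at this
      omega
  -- row lower bound: each cell of label i sits in row ≥ rank(i)
  have hrowlb : ∀ t ∈ T, cntz a (t.2.2 - 1) + 1 ≤ t.1 := by
    intro t ht
    obtain ⟨hnz, hc1, hc2⟩ := hcolfact t ht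
    have hbd' := hbd t ht
    have hklen : t.2.2 - 1 < a.length := by omega
    obtain ⟨htm, hcm, hlm⟩ := hρ (t.2.2 - 1) hklen hnz
    have hle : (ρ (t.2.2 - 1)).1 ≤ t.1 := by
      rcases eq_or_lt_of_le hc2 with he | hl
      · have heq : ρ (t.2.2 - 1) = t :=
          huniq2 _ htm _ ht (by rw [hcm, he]) (by rw [hlm]; omega)
        rw [heq]
      · exact hdesc t ht _ htm (by rw [hlm]; omega) (by rw [hcm]; exact hl)
    have hcard : cntz a (t.2.2 - 1) ≤ (ρ (t.2.2 - 1)).1 - 1 := by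
      rw [cntz_eq_card a _ (le_of_lt hklen)]
      have hsub : ∀ k' ∈ (Finset.range (t.2.2 - 1)).filter (fun k' => a.getD k' 0 ≠ 0),
          (fun k' => (ρ k').1) k' ∈ Finset.Icc 1 ((ρ (t.2.2 - 1)).1 - 1) := by
        intro k' hk'
        dsimp only
        rw [Finset.mem_filter, Finset.mem_range] at hk'
        have hkl' : k' < a.length := by omega
        obtain ⟨ht1, -, -⟩ := hρ k' hkl' hk'.2
        have hz := hbd _ ht1
        have hmono := hρmono k' (t.2.2 - 1) hkl' hklen hk'.2 hnz hk'.1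
        rw [Finset.mem_Icc]
        exact ⟨hz.1, by omega⟩
      have hinj : Set.InjOn (fun k' => (ρ k').1)
          ((Finset.range (t.2.2 - 1)).filter (fun k' => a.getD k' 0 ≠ 0)) := by
        intro x hx y hy he
        dsimp only at he
        rw [Finset.coe_filter, Set.mem_setOf_eq, Finset.mem_range] at hx hy
        have hxl : x < a.length := by omega
        have hyl : y < a.length := by omega
        by_contra hne
        rcases Nat.lt_or_ge x y with h | h
        · have := hρmono x y hxl hyl hx.2 hy.2 h; omega
        · have hgt : y < x := by omega
          have := hρmono y x hyl hxl hy.2 hx.2 hgt; omega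
      have := Finset.card_le_card_of_injOn _ hsub hinj
      rw [Nat.card_Icc] at this
      omega
    have hz := hbd _ htm
    omega
  -- row weights from the weight hypothesis
  have hwt : ∀ r : ℕ, (wtT T) r = (T.filter (fun t => t.1 = r)).card := by
    intro r
    rw [wtT, Finsupp.finset_sum_apply, Finset.card_filter]
    refine Finset.sum_congr rfl fun t _ => ?_
    rw [Finsupp.single_apply]
  have hcomp : ∀ r, 1 ≤ r → compFinsupp (flatC a) r = (flatC a).getD (r - 1) 0 := by
    intro r hr
    rw [compFinsupp, Finsupp.finset_sum_apply]
    by_cases hrl : r - 1 < (flatC a).length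
    · rw [Finset.sum_eq_single (r - 1)]
      · rw [Finsupp.single_apply, if_pos (by omega)]
      · intro b _ hne
        rw [Finsupp.single_apply, if_neg (by omega)]
      · intro h
        exact absurd (Finset.mem_range.mpr hrl) h
    · rw [List.getD_eq_default _ _ (by omega)]
      apply Finset.sum_eq_zero
      intro i hi
      rw [Finset.mem_range] at hi
      rw [Finsupp.single_apply, if_neg (by omega)]
  have hrowcard : ∀ j, 1 ≤ j →
      (T.filter (fun t => t.1 = j)).card = (flatC a).getD (j - 1) 0 := by
    intro j hj
    have h := DFunLike.congr_fun hw j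
    rw [hwt j, hcomp j hj] at h
    exact h
  -- counting cells by labels
  have hlabelcard : ∀ (j : ℕ),
      (T.filter (fun t => cntz a (t.2.2 - 1) + 1 = j)).card =
        ∑ i ∈ (Finset.Icc 1 a.length).filter (fun i => cntz a (i - 1) + 1 = j), a.getD (i - 1) 0 := by
    intro j
    have hU : T.filter (fun t => cntz a (t.2.2 - 1) + 1 = j) =
        (((Finset.Icc 1 a.length).filter (fun i => cntz a (i - 1) + 1 = j)) ×ˢ Finset.Icc 1 m).biUnion
          (fun ic => T.filter (fun t => t.2.1 = ic.2 ∧ t.2.2 = ic.1)) := by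
      ext t
      simp only [Finset.mem_filter, Finset.mem_biUnion, Finset.mem_product, Finset.mem_Icc]
      constructor
      · rintro ⟨ht, hP⟩
        have hb := hbd t ht
        have hcf := hcolfact t ht
        exact ⟨(t.2.2, t.2.1), ⟨⟨⟨hb.2.2.1, hb.2.2.2⟩, hP⟩, by omega, hcf.2.2⟩, ht, rfl, rfl⟩
      · rintro ⟨ic, ⟨⟨_, hicP⟩, _⟩, ht, _, hl⟩
        exact ⟨ht, by rw [hl]; exact hicP⟩
    rw [hU, Finset.card_biUnion]
    · rw [Finset.sum_product]
      refine Finset.sum_congr rfl fun i hi => ?_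
      rw [Finset.mem_filter, Finset.mem_Icc] at hi
      have hle := getD_le_maxPart a (i - 1)
      calc ∑ c ∈ Finset.Icc 1 m, (T.filter (fun t => t.2.1 = c ∧ t.2.2 = i)).card
          = ∑ c ∈ Finset.Icc 1 m,
              (if m - a.getD (i - 1) 0 < c ∧ c ≤ m then 1 else 0) :=
            Finset.sum_congr rfl fun c _ => hcnt i (Finset.mem_Icc.mpr hi.1) c
        _ = ((Finset.Icc 1 m).filter (fun c => m - a.getD (i - 1) 0 < c ∧ c ≤ m)).card :=
            (Finset.card_filter _ _).symm
        _ = (Finset.Icc (m - a.getD (i - 1) 0 + 1) m).card := by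
            congr 1
            ext c
            rw [Finset.mem_filter, Finset.mem_Icc, Finset.mem_Icc]
            omega
        _ = a.getD (i - 1) 0 := by rw [Nat.card_Icc]; omega
    · intro x hx y hy hxy
      simp only [Function.onFun]
      rw [Finset.disjoint_left]
      intro t htx hty
      rw [Finset.mem_filter] at htx hty
      exact hxy (Prod.ext (htx.2.2.symm.trans hty.2.2) (htx.2.1.symm.trans hty.2.1))
  -- main rigidity: each cell sits in row = rank of its label
  have hmain : ∀ j, ∀ t ∈ T, cntz a (t.2.2 - 1) + 1 = j → t.1 = j := by
    intro j
    induction j using Nat.strong_induction_on with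
    | _ j ih =>
    intro t ht hrk
    have hj1 : 1 ≤ j := by omega
    have hA := hrowcard j hj1
    have hBcard : (T.filter (fun t => cntz a (t.2.2 - 1) + 1 = j)).card =
        (flatC a).getD (j - 1) 0 := by
      rw [hlabelcard j]
      by_cases hjl : j - 1 < (flatC a).length
      · obtain ⟨k, hk, hnz, hck⟩ := cntz_surj a (j - 1) hjl
        have hval := flat_getD_cntz a k hk hnz
        rw [Finset.sum_eq_single (k + 1)]
        · rw [show k + 1 - 1 = k from rfl, ← hval, hck]
        · intro i hi hne
          rw [Finset.mem_filter, Finset.mem_Icc] at hi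
          by_contra h0
          have hilen : i - 1 < a.length := by omega
          have hik : i - 1 = k := by
            by_contra hne'
            rcases Nat.lt_or_ge (i - 1) k with h | h
            · have := cntz_strict a h hilen h0
              omega
            · have hgt : k < i - 1 := by omega
              have := cntz_strict a hgt hk hnz
              omega
          omega
        · intro hnot
          exfalso
          apply hnot
          rw [Finset.mem_filter, Finset.mem_Icc]
          refine ⟨⟨by omega, by omega⟩, ?_⟩
          rw [show k + 1 - 1 = k from rfl, hck]
          omega
      · rw [List.getD_eq_default _ _ (by omega)]
        apply Finset.sum_eq_zero
        intro i hi
        rw [Finset.mem_filter, Finset.mem_Icc] at hi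
        by_contra h0
        have hilen : i - 1 < a.length := by omega
        have := cntz_lt_len a (i - 1) hilen h0
        omega
    have hAB : T.filter (fun s => s.1 = j) ⊆
        T.filter (fun t => cntz a (t.2.2 - 1) + 1 = j) := by
      intro s hs
      rw [Finset.mem_filter] at hs ⊢
      refine ⟨hs.1, ?_⟩
      have hlb := hrowlb s hs.1
      rcases eq_or_lt_of_le (show cntz a (s.2.2 - 1) + 1 ≤ j by omega) with he | hl
      · exact he
      · exfalso
        have := ih _ hl s hs.1 rfl
        omega
    have heq := Finset.eq_of_subset_of_card_le hAB (by omega)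
    have htB : t ∈ T.filter (fun t => cntz a (t.2.2 - 1) + 1 = j) :=
      Finset.mem_filter.mpr ⟨ht, hrk⟩
    rw [← heq] at htB
    exact (Finset.mem_filter.mp htB).2
  -- conclude
  ext ⟨r, c⟩
  rw [Tcells, Finset.mem_image, RJ, Finset.mem_filter, Finset.mem_product,
    Finset.mem_Icc, Finset.mem_Icc, maxPart_flat]
  dsimp only
  constructor
  · rintro ⟨t, ht, hte⟩
    rw [Prod.mk.injEq] at hte
    obtain ⟨htr, htc⟩ := hte
    obtain ⟨hnz, hc1, hc2⟩ := hcolfact t ht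
    have hbd' := hbd t ht
    have hklen : t.2.2 - 1 < a.length := by omega
    have hrank := hmain (cntz a (t.2.2 - 1) + 1) t ht rfl
    have hrlt := cntz_lt_len a (t.2.2 - 1) hklen hnz
    have hval := flat_getD_cntz a (t.2.2 - 1) hklen hnz
    refine ⟨⟨⟨by omega, by omega⟩, by omega, by omega⟩, ?_⟩
    rw [← htr, hrank]
    have hatt : att (flatC a) (cntz a (t.2.2 - 1) + 1) = a.getD (t.2.2 - 1) 0 := by
      rw [att, show cntz a (t.2.2 - 1) + 1 - 1 = cntz a (t.2.2 - 1) from rfl, hval]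
    rw [hatt]
    omega
  · rintro ⟨⟨⟨hr1, hr2⟩, hc1', hc2'⟩, hcond⟩
    obtain ⟨k, hk, hnz, hck⟩ := cntz_surj a (r - 1) (by omega)
    have hval := flat_getD_cntz a k hk hnz
    rw [hck] at hval
    have hatt : att (flatC a) r = a.getD k 0 := by rw [att, ← hval]
    rw [hatt] at hcond
    obtain ⟨t, ht, htc, htl⟩ := hexist (k + 1) c (by omega) (by omega)
      (by rw [show k + 1 - 1 = k from rfl]; exact hcond) hc2'
    have hrank := hmain (cntz a (t.2.2 - 1) + 1) t ht rfl
    rw [htl, show k + 1 - 1 = k from rfl, hck] at hrank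
    refine ⟨t, ht, ?_⟩
    rw [Prod.mk.injEq]
    exact ⟨by omega, htc⟩

end Aux

/-- For `α = flat(a)` and `T_a` the (unique) lock Kohnert tableau of content `a`
with weight `α`, the Rectification algorithm `R_α` applied to the underlying
diagram of `T_a` yields the key diagram of `α`; in particular `R_α(𝔻(T_a)) ≠ 0`. -/
theorem rectification_of_lowest_lkt (a : List ℕ) (T : Finset (ℕ × ℕ × ℕ))
    (hT : IsLKTF a T) (hw : wtT T = compFinsupp (flatC a)) :
    RalgRel (flatC a) (Tcells T) (keyDiagram (flatC a)) := by
  rw [Aux.Tcells_eq a T hT hw]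
  exact Aux.ralg_RJ (flatC a)
end
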